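/- arXiv:2603.03487 — 3 statements merged into one kernel-verified Lean document; each statement's English description precedes it below -/
import Mathlib

section
/- Noether's theorem (converse direction): if C(t,q,q̇) is a smooth function satisfying the off-shell multiplier identity dC/dt = (q̈^i − f^i) ∂_{q̇^i}C along arbitrary curves, where f is determined by a nondegenerate Lagrangian L, then the vector field X_P with P^i = (g^{-1})^{ij} ∂_{q̇^j}C is an infinitesimal variational symmetry of L with characteristic W = P^i ∂_{q̇^i}L − C, i.e. P^i ∂_{q^i}L + Ṗ^i ∂_{q̇^i}L = Ẇ identically. -/
open Matrix
set_option maxHeartbeats 1000000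

/-- Functions of `(t, q, q̇)`. -/
abbrev Fn (N : ℕ) := ℝ → (Fin N → ℝ) → (Fin N → ℝ) → ℝ

/-- Partial derivative in `t`. -/
noncomputable def pt {N : ℕ} (F : Fn N) : Fn N :=
  fun t q v => deriv (fun s => F s q v) t

/-- Partial derivative in `q^i`. -/
noncomputable def pq {N : ℕ} (i : Fin N) (F : Fn N) : Fn N :=
  fun t q v => deriv (fun s => F t (Function.update q i s) v) (q i)

/-- Partial derivative in `q̇^i`. -/
noncomputable def pv {N : ℕ} (i : Fin N) (F : Fn N) : Fn N :=
  fun t q v => deriv (fun s => F t q (Function.update v i s)) (v i)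

/-- Smoothness of a function of `(t,q,q̇)`. -/
def SmoothFn {N : ℕ} (F : Fn N) : Prop :=
  ContDiff ℝ (⊤ : ℕ∞) (fun p : ℝ × (Fin N → ℝ) × (Fin N → ℝ) => F p.1 p.2.1 p.2.2)

/-- Hessian matrix `g_{ij} = ∂²L/∂q̇^i∂q̇^j`. -/
noncomputable def gmat {N : ℕ} (L : Fn N) (t : ℝ) (q v : Fin N → ℝ) :
    Matrix (Fin N) (Fin N) ℝ :=
  Matrix.of fun i j => pv i (pv j L) t q v

/-- Matrix `h_{ij} = ∂²L/∂q^i∂q̇^j`. -/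
noncomputable def hmat {N : ℕ} (L : Fn N) (t : ℝ) (q v : Fin N → ℝ) :
    Matrix (Fin N) (Fin N) ℝ :=
  Matrix.of fun i j => pq i (pv j L) t q v

/-- `f^i = (g⁻¹)^{ij}(∂L/∂q^j − ∂²L/∂t∂q̇^j − q̇^k ∂²L/∂q^k∂q̇^j)`. -/
noncomputable def fvec {N : ℕ} (L : Fn N) (i : Fin N) : Fn N :=
  fun t q v => ∑ j, (gmat L t q v)⁻¹ i j *
    (pq j L t q v - pt (pv j L) t q v - ∑ k, v k * pq k (pv j L) t q v)

/-- Time derivative `𝒟_t = ∂_t + q̇^i∂_{q^i} + f^i∂_{q̇^i}` for a general rhs `f`. -/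
noncomputable def DtF {N : ℕ} (f : Fin N → Fn N) (C : Fn N) : Fn N :=
  fun t q v => pt C t q v + ∑ i, v i * pq i C t q v + ∑ i, f i t q v * pv i C t q v

/-- Time derivative restricted to the solution space of the Lagrangian system. -/
noncomputable def Dt {N : ℕ} (L : Fn N) (C : Fn N) : Fn N :=
  DtF (fvec L) C

/-- The matrix `c^{ij} = (g⁻¹)^{ik}(g⁻¹)^{jl}(h_{kl} − h_{lk})`. -/
noncomputable def cmat {N : ℕ} (L : Fn N) (t : ℝ) (q v : Fin N → ℝ) :
    Matrix (Fin N) (Fin N) ℝ :=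
  Matrix.of fun i j => ∑ k, ∑ l,
    (gmat L t q v)⁻¹ i k * (gmat L t q v)⁻¹ j l *
      (hmat L t q v k l - hmat L t q v l k)

/-- Lagrangian-variable Poisson bracket. -/
noncomputable def PB {N : ℕ} (L : Fn N) (F₁ F₂ : Fn N) : Fn N :=
  fun t q v =>
    (∑ i, ∑ j, (gmat L t q v)⁻¹ i j *
      (pq i F₁ t q v * pv j F₂ t q v - pq i F₂ t q v * pv j F₁ t q v))
    + ∑ i, ∑ j, cmat L t q v i j * pv i F₁ t q v * pv j F₂ t q v

/-- Noether characteristic `P^i = (g⁻¹)^{ij} ∂_{q̇^j} C`. -/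
noncomputable def Pchar {N : ℕ} (L C : Fn N) (i : Fin N) : Fn N :=
  fun t q v => ∑ j, (gmat L t q v)⁻¹ i j * pv j C t q v

/-- Action of the symmetry vector field `X^ℰ_{(C)} = P^i∂_{q^i} + (𝒟_t P^i)∂_{q̇^i}`. -/
noncomputable def Xact {N : ℕ} (L C F : Fn N) : Fn N :=
  fun t q v => (∑ i, Pchar L C i t q v * pq i F t q v)
    + ∑ i, Dt L (Pchar L C i) t q v * pv i F t q v

namespace NoetherAux

open scoped ContDiff

variable {N : ℕ}

abbrev EE (N : ℕ) := ℝ × (Fin N → ℝ) × (Fin N → ℝ)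

def unc (F : Fn N) : EE N → ℝ := fun p => F p.1 p.2.1 p.2.2

lemma two_le_inf : (2 : WithTop ℕ∞) ≤ ∞ := by
  rw [show (2 : WithTop ℕ∞) = ((2:ℕ∞):WithTop ℕ∞) by norm_cast]
  exact WithTop.coe_le_coe.mpr le_top

lemma one_le_inf : (1 : WithTop ℕ∞) ≤ ∞ := by
  rw [show (1 : WithTop ℕ∞) = ((1:ℕ∞):WithTop ℕ∞) by norm_cast]
  exact WithTop.coe_le_coe.mpr le_top

lemma infp1 : ((∞ : WithTop ℕ∞) + 1) ≤ ∞ := by simp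

noncomputable def et (N : ℕ) : EE N := (1, 0, 0)
noncomputable def eq' (i : Fin N) : EE N := (0, Pi.single i 1, 0)
noncomputable def ev' (i : Fin N) : EE N := (0, 0, Pi.single i 1)

lemma pt_eq_fderiv {F : Fn N} {t : ℝ} {q v : Fin N → ℝ}
    (h : DifferentiableAt ℝ (unc F) (t, q, v)) :
    pt F t q v = fderiv ℝ (unc F) (t, q, v) (et N) := by
  have hφ : HasDerivAt (fun s : ℝ => ((s, q, v) : EE N)) (et N) t :=
    (hasDerivAt_id t).prodMk (hasDerivAt_const _ _)
  exact (h.hasFDerivAt.comp_hasDerivAt t hφ).deriv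

lemma pq_eq_fderiv {F : Fn N} (i : Fin N) {t : ℝ} {q v : Fin N → ℝ}
    (h : DifferentiableAt ℝ (unc F) (t, q, v)) :
    pq i F t q v = fderiv ℝ (unc F) (t, q, v) (eq' i) := by
  have hφ : HasDerivAt (fun s : ℝ => ((t, Function.update q i s, v) : EE N)) (eq' i) (q i) :=
    (hasDerivAt_const _ _).prodMk ((hasDerivAt_update q i (q i)).prodMk (hasDerivAt_const _ _))
  have h' : DifferentiableAt ℝ (unc F) (t, Function.update q i (q i), v) := by
    rwa [Function.update_eq_self]
  have H := (h'.hasFDerivAt.comp_hasDerivAt (q i) hφ).deriv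
  rw [Function.update_eq_self] at H
  exact H

lemma pv_eq_fderiv {F : Fn N} (i : Fin N) {t : ℝ} {q v : Fin N → ℝ}
    (h : DifferentiableAt ℝ (unc F) (t, q, v)) :
    pv i F t q v = fderiv ℝ (unc F) (t, q, v) (ev' i) := by
  have hφ : HasDerivAt (fun s : ℝ => ((t, q, Function.update v i s) : EE N)) (ev' i) (v i) :=
    (hasDerivAt_const _ _).prodMk ((hasDerivAt_const _ _).prodMk (hasDerivAt_update v i (v i)))
  have h' : DifferentiableAt ℝ (unc F) (t, q, Function.update v i (v i)) := by
    rwa [Function.update_eq_self]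
  have H := (h'.hasFDerivAt.comp_hasDerivAt (v i) hφ).deriv
  rw [Function.update_eq_self] at H
  exact H

lemma unc_pv {F : Fn N} (hF : ContDiff ℝ ∞ (unc F)) (i : Fin N) :
    unc (pv i F) = fun x => fderiv ℝ (unc F) x (ev' i) := by
  funext x
  exact pv_eq_fderiv i ((hF.differentiable (by simp)).differentiableAt)

lemma pv_smooth {F : Fn N} (hF : ContDiff ℝ ∞ (unc F)) (i : Fin N) :
    ContDiff ℝ ∞ (unc (pv i F)) := by
  rw [unc_pv hF i]
  exact (hF.fderiv_right infp1).clm_apply contDiff_const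

lemma sum_smul_single (a : Fin N → ℝ) :
    ∑ i, a i • (Pi.single i 1 : Fin N → ℝ) = a := by
  have : ∀ i, a i • (Pi.single i 1 : Fin N → ℝ) = Pi.single i (a i) := by
    intro i
    ext j
    by_cases h : j = i
    · subst h; simp
    · simp [Pi.single_eq_of_ne h]
  rw [Finset.sum_congr rfl fun i _ => this i]
  exact Finset.univ_sum_single a

lemma vec_decomp (adot addot : Fin N → ℝ) :
    ((1, adot, addot) : EE N) = et N + (∑ i, adot i • eq' i) + ∑ i, addot i • ev' i := by
  have h1 : (∑ i, adot i • eq' i) = ((0, adot, 0) : EE N) := by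
    rw [show ((0, adot, 0) : EE N)
        = (0, (∑ i, adot i • (Pi.single i 1 : Fin N → ℝ)), 0) by rw [sum_smul_single]]
    simp [eq', Prod.ext_iff, Prod.fst_sum, Prod.snd_sum]
  have h2 : (∑ i, addot i • ev' i) = ((0, 0, addot) : EE N) := by
    rw [show ((0, 0, addot) : EE N)
        = (0, 0, (∑ i, addot i • (Pi.single i 1 : Fin N → ℝ))) by rw [sum_smul_single]]
    simp [ev', Prod.ext_iff, Prod.fst_sum, Prod.snd_sum]
  rw [h1, h2]
  simp [et, Prod.ext_iff]

lemma hasDerivAt_curve (F : Fn N) (hF : ContDiff ℝ ∞ (unc F))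
    (q : ℝ → Fin N → ℝ) (hq : ContDiff ℝ 2 q) (t : ℝ) :
    HasDerivAt (fun s => F s (q s) (deriv q s))
      (pt F t (q t) (deriv q t)
        + (∑ i, deriv q t i * pq i F t (q t) (deriv q t))
        + ∑ i, deriv (deriv q) t i * pv i F t (q t) (deriv q t)) t := by
  have hq1 : Differentiable ℝ q := hq.differentiable (by norm_num)
  have hdq : Differentiable ℝ (deriv q) := by
    have h2 : ContDiff ℝ ((1:WithTop ℕ∞) + 1) q := by exact_mod_cast hq
    exact ((contDiff_succ_iff_deriv.mp h2).2.2).differentiable one_ne_zero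
  have hγ : HasDerivAt (fun s => ((s, q s, deriv q s) : EE N))
      (1, deriv q t, deriv (deriv q) t) t :=
    (hasDerivAt_id t).prodMk ((hq1 t).hasDerivAt.prodMk ((hdq t).hasDerivAt))
  have hdF : DifferentiableAt ℝ (unc F) (t, q t, deriv q t) :=
    (hF.differentiable (by simp)).differentiableAt
  have H := hdF.hasFDerivAt.comp_hasDerivAt t hγ
  refine H.congr_deriv (Eq.symm ?_)
  have hsq : (∑ i, deriv q t i * pq i F t (q t) (deriv q t))
      = ∑ i, deriv q t i * fderiv ℝ (unc F) (t, q t, deriv q t) (eq' i) :=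
    Finset.sum_congr rfl fun i _ => by rw [pq_eq_fderiv i hdF]
  have hsv : (∑ i, deriv (deriv q) t i * pv i F t (q t) (deriv q t))
      = ∑ i, deriv (deriv q) t i * fderiv ℝ (unc F) (t, q t, deriv q t) (ev' i) :=
    Finset.sum_congr rfl fun i _ => by rw [pv_eq_fderiv i hdF]
  rw [pt_eq_fderiv hdF, hsq, hsv, vec_decomp, map_add, map_add, map_sum, map_sum]
  simp [smul_eq_mul]

lemma pv_pv_symm {F : Fn N} (hF : ContDiff ℝ ∞ (unc F)) (i j : Fin N)
    (t : ℝ) (q v : Fin N → ℝ) :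
    pv i (pv j F) t q v = pv j (pv i F) t q v := by
  have hd : ∀ k : Fin N, DifferentiableAt ℝ (unc (pv k F)) (t, q, v) := fun k =>
    ((pv_smooth hF k).differentiable (by simp)).differentiableAt
  have hdd : DifferentiableAt ℝ (fderiv ℝ (unc F)) (t, q, v) :=
    ((hF.fderiv_right infp1).differentiable (by simp)).differentiableAt
  have key : ∀ a b : EE N,
      fderiv ℝ (fun y => fderiv ℝ (unc F) y b) (t, q, v) a
        = fderiv ℝ (fderiv ℝ (unc F)) (t, q, v) a b := by
    intro a b
    rw [fderiv_clm_apply hdd (differentiableAt_const b)]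
    simp
  have hsymm := (hF.contDiffAt (x := (t, q, v))).isSymmSndFDerivAt (by rw [minSmoothness_of_isRCLikeNormedField]; exact two_le_inf)
  rw [pv_eq_fderiv i (hd j), pv_eq_fderiv j (hd i), unc_pv hF j, unc_pv hF i,
    key _ (ev' j), key _ (ev' i)]
  exact hsymm (ev' i) (ev' j)

lemma diff_prod {ι : Type*} (s : Finset ι) (f : ι → EE N → ℝ)
    (h : ∀ i ∈ s, Differentiable ℝ (f i)) :
    Differentiable ℝ (fun x => ∏ i ∈ s, f i x) := by
  classical
  induction s using Finset.induction_on with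
  | empty => simp only [Finset.prod_empty]; exact differentiable_const (1:ℝ)
  | @insert a s ha ih =>
    simp only [Finset.prod_insert ha]
    exact (h a (Finset.mem_insert_self a s)).mul
      (ih fun i hi => h i (Finset.mem_insert_of_mem hi))

lemma diff_det {M : EE N → Matrix (Fin N) (Fin N) ℝ}
    (h : ∀ i j, Differentiable ℝ fun x => M x i j) :
    Differentiable ℝ fun x => (M x).det := by
  have : (fun x => (M x).det)
      = fun x => ∑ σ : Equiv.Perm (Fin N), ((Equiv.Perm.sign σ : ℤ) : ℝ) * ∏ i, M x (σ i) i := by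
    funext x; rw [Matrix.det_apply']
  rw [this]
  exact Differentiable.fun_sum fun σ _ =>
    (diff_prod Finset.univ (fun i x => M x (σ i) i) fun i _ => h (σ i) i).const_mul _

lemma diff_inv_entry {M : EE N → Matrix (Fin N) (Fin N) ℝ}
    (h : ∀ i j, Differentiable ℝ fun x => M x i j)
    (hunit : ∀ x, IsUnit (M x)) (i j : Fin N) :
    Differentiable ℝ fun x => (M x)⁻¹ i j := by
  have hdet : ∀ x, (M x).det ≠ 0 := fun x =>
    ((Matrix.isUnit_iff_isUnit_det (M x)).mp (hunit x)).ne_zero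
  have hrw : (fun x => (M x)⁻¹ i j)
      = fun x => ((M x).det)⁻¹ * ((M x).updateRow j (Pi.single i 1)).det := by
    funext x
    rw [Matrix.inv_def, Matrix.smul_apply, Matrix.adjugate_apply, Ring.inverse_eq_inv,
      smul_eq_mul]
  rw [hrw]
  have hup : ∀ k l, Differentiable ℝ fun x => ((M x).updateRow j (Pi.single i 1)) k l := by
    intro k l
    simp only [Matrix.updateRow_apply]
    split_ifs
    · exact differentiable_const _
    · exact h k l
  exact ((diff_det h).inv hdet).mul (diff_det hup)

open Finset in
theorem noether_converse_aux {N : ℕ}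
    (L : Fn N) (hL : SmoothFn L)
    (hg : ∀ t q v, IsUnit (gmat L t q v))
    (C : Fn N) (hC : SmoothFn C)
    (hmult : ∀ (q : ℝ → (Fin N → ℝ)), ContDiff ℝ 2 q → ∀ t : ℝ,
      deriv (fun s => C s (q s) (deriv q s)) t
        = ∑ i, (deriv (deriv q) t i - fvec L i t (q t) (deriv q t))
            * pv i C t (q t) (deriv q t)) :
    ∀ (q : ℝ → (Fin N → ℝ)), ContDiff ℝ 2 q → ∀ t : ℝ,
      (∑ i, Pchar L C i t (q t) (deriv q t) * pq i L t (q t) (deriv q t))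
        + (∑ i, deriv (fun s => Pchar L C i s (q s) (deriv q s)) t
            * pv i L t (q t) (deriv q t))
      = deriv (fun s => (∑ i, Pchar L C i s (q s) (deriv q s)
          * pv i L s (q s) (deriv q s)) - C s (q s) (deriv q s)) t := by
  intro q hq t
  classical
  have hLinf : ContDiff ℝ ∞ (unc L) := ContDiff.of_le hL (by simp)
  have hCinf : ContDiff ℝ ∞ (unc C) := ContDiff.of_le hC (by simp)
  set q0 : Fin N → ℝ := q t with hq0
  set v0 : Fin N → ℝ := deriv q t with hv0
  set a : Fin N → ℝ := deriv (deriv q) t with ha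
  -- differentiability of the curve
  have hq1 : Differentiable ℝ q := hq.differentiable (by norm_num)
  have hdq : Differentiable ℝ (deriv q) := by
    have h2 : ContDiff ℝ ((1:WithTop ℕ∞) + 1) q := by exact_mod_cast hq
    exact ((contDiff_succ_iff_deriv.mp h2).2.2).differentiable one_ne_zero
  have hγ : HasDerivAt (fun s => ((s, q s, deriv q s) : EE N))
      (1, deriv q t, deriv (deriv q) t) t :=
    (hasDerivAt_id t).prodMk ((hq1 t).hasDerivAt.prodMk ((hdq t).hasDerivAt))
  -- differentiability of the P characteristics along the curve
  have hgE : ∀ i j, Differentiable ℝ (fun x : EE N => gmat L x.1 x.2.1 x.2.2 i j) := by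
    intro i j
    exact ((pv_smooth (pv_smooth hLinf j) i).differentiable (by simp))
  have hGinvE : ∀ i j, Differentiable ℝ (fun x : EE N => (gmat L x.1 x.2.1 x.2.2)⁻¹ i j) :=
    fun i j => diff_inv_entry hgE (fun x => hg x.1 x.2.1 x.2.2) i j
  have hPdiff : ∀ i, Differentiable ℝ (fun x : EE N => Pchar L C i x.1 x.2.1 x.2.2) := by
    intro i
    have : (fun x : EE N => Pchar L C i x.1 x.2.1 x.2.2)
        = fun x : EE N => ∑ j, (gmat L x.1 x.2.1 x.2.2)⁻¹ i j * unc (pv j C) x := rfl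
    rw [this]
    exact Differentiable.fun_sum fun j _ =>
      (hGinvE i j).mul ((pv_smooth hCinf j).differentiable (by simp))
  have hPd : ∀ i, DifferentiableAt ℝ (fun s => Pchar L C i s (q s) (deriv q s)) t := by
    intro i
    have heq : (fun s => Pchar L C i s (q s) (deriv q s))
        = ((fun x : EE N => Pchar L C i x.1 x.2.1 x.2.2)
            ∘ (fun s => ((s, q s, deriv q s) : EE N))) := rfl
    rw [heq]
    exact DifferentiableAt.comp t (hPdiff i (t, q t, deriv q t)) hγ.differentiableAt
  -- derivative of pv i L along the curve
  have hPL : ∀ i, HasDerivAt (fun s => pv i L s (q s) (deriv q s))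
      (pt (pv i L) t q0 v0 + (∑ k, v0 k * pq k (pv i L) t q0 v0)
        + ∑ k, a k * pv k (pv i L) t q0 v0) t :=
    fun i => hasDerivAt_curve (pv i L) (pv_smooth hLinf i) q hq t
  -- derivative of C along the curve
  have hCder : HasDerivAt (fun s => C s (q s) (deriv q s))
      (pt C t q0 v0 + (∑ k, v0 k * pq k C t q0 v0) + ∑ k, a k * pv k C t q0 v0) t :=
    hasDerivAt_curve C hCinf q hq t
  have hCval : pt C t q0 v0 + (∑ k, v0 k * pq k C t q0 v0) + ∑ k, a k * pv k C t q0 v0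
      = ∑ i, (a i - fvec L i t q0 v0) * pv i C t q0 v0 := by
    rw [← hCder.deriv]; exact hmult q hq t
  have hSder : HasDerivAt
      (fun s => ∑ i, Pchar L C i s (q s) (deriv q s) * pv i L s (q s) (deriv q s))
      (∑ i, (deriv (fun s => Pchar L C i s (q s) (deriv q s)) t * pv i L t q0 v0
        + Pchar L C i t q0 v0 * (pt (pv i L) t q0 v0
          + (∑ k, v0 k * pq k (pv i L) t q0 v0) + ∑ k, a k * pv k (pv i L) t q0 v0))) t :=
    HasDerivAt.fun_sum fun i _ => ((hPd i).hasDerivAt.mul (hPL i))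
  have hDer := (hSder.fun_sub hCder).deriv
  rw [hDer, hCval]
  -- Algebra at the fixed point
  have hGG : gmat L t q0 v0 * (gmat L t q0 v0)⁻¹ = 1 :=
    Matrix.mul_nonsing_inv _ ((Matrix.isUnit_iff_isUnit_det _).mp (hg t q0 v0))
  have hGsym : ∀ i j, gmat L t q0 v0 i j = gmat L t q0 v0 j i := by
    intro i j
    exact pv_pv_symm hLinf i j t q0 v0
  have hGisym : ∀ i j, (gmat L t q0 v0)⁻¹ i j = (gmat L t q0 v0)⁻¹ j i := by
    intro i j
    have hT : (gmat L t q0 v0)ᵀ = gmat L t q0 v0 := by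
      ext p r; exact hGsym r p
    have hiT : ((gmat L t q0 v0)⁻¹)ᵀ = (gmat L t q0 v0)⁻¹ := by
      rw [Matrix.transpose_nonsing_inv, hT]
    calc (gmat L t q0 v0)⁻¹ i j = ((gmat L t q0 v0)⁻¹)ᵀ j i := rfl
    _ = (gmat L t q0 v0)⁻¹ j i := by rw [hiT]
  have claim1 : ∀ k, ∑ i, gmat L t q0 v0 k i * Pchar L C i t q0 v0 = pv k C t q0 v0 := by
    intro k
    calc ∑ i, gmat L t q0 v0 k i * Pchar L C i t q0 v0
        = ∑ i, ∑ j, gmat L t q0 v0 k i * ((gmat L t q0 v0)⁻¹ i j * pv j C t q0 v0) := by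
          refine Finset.sum_congr rfl fun i _ => ?_
          show gmat L t q0 v0 k i * ∑ j, (gmat L t q0 v0)⁻¹ i j * pv j C t q0 v0 = _
          rw [Finset.mul_sum]
      _ = ∑ j, ∑ i, gmat L t q0 v0 k i * ((gmat L t q0 v0)⁻¹ i j * pv j C t q0 v0) :=
          Finset.sum_comm
      _ = ∑ j, (∑ i, gmat L t q0 v0 k i * (gmat L t q0 v0)⁻¹ i j) * pv j C t q0 v0 := by
          refine Finset.sum_congr rfl fun j _ => ?_
          rw [Finset.sum_mul]
          exact Finset.sum_congr rfl fun i _ => by ring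
      _ = ∑ j, (1 : Matrix (Fin N) (Fin N) ℝ) k j * pv j C t q0 v0 := by
          refine Finset.sum_congr rfl fun j _ => ?_
          rw [← Matrix.mul_apply, hGG]
      _ = pv k C t q0 v0 := by
          simp [Matrix.one_apply]
  have claim2 : ∑ i, Pchar L C i t q0 v0
        * (pq i L t q0 v0 - pt (pv i L) t q0 v0 - ∑ k, v0 k * pq k (pv i L) t q0 v0)
      = ∑ j, fvec L j t q0 v0 * pv j C t q0 v0 := by
    calc ∑ i, Pchar L C i t q0 v0
        * (pq i L t q0 v0 - pt (pv i L) t q0 v0 - ∑ k, v0 k * pq k (pv i L) t q0 v0)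
        = ∑ i, ∑ j, (gmat L t q0 v0)⁻¹ i j * pv j C t q0 v0
            * (pq i L t q0 v0 - pt (pv i L) t q0 v0
              - ∑ k, v0 k * pq k (pv i L) t q0 v0) := by
          refine Finset.sum_congr rfl fun i _ => ?_
          show (∑ j, (gmat L t q0 v0)⁻¹ i j * pv j C t q0 v0) * _ = _
          rw [Finset.sum_mul]
      _ = ∑ j, ∑ i, (gmat L t q0 v0)⁻¹ i j * pv j C t q0 v0
            * (pq i L t q0 v0 - pt (pv i L) t q0 v0
              - ∑ k, v0 k * pq k (pv i L) t q0 v0) := Finset.sum_comm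
      _ = ∑ j, (∑ i, (gmat L t q0 v0)⁻¹ j i
            * (pq i L t q0 v0 - pt (pv i L) t q0 v0
              - ∑ k, v0 k * pq k (pv i L) t q0 v0)) * pv j C t q0 v0 := by
          refine Finset.sum_congr rfl fun j _ => ?_
          rw [Finset.sum_mul]
          refine Finset.sum_congr rfl fun i _ => ?_
          rw [hGisym i j]; ring
      _ = ∑ j, fvec L j t q0 v0 * pv j C t q0 v0 := rfl
  have hmain : ∑ i, Pchar L C i t q0 v0
        * (pt (pv i L) t q0 v0 + (∑ k, v0 k * pq k (pv i L) t q0 v0)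
          + ∑ k, a k * pv k (pv i L) t q0 v0)
      - ∑ i, Pchar L C i t q0 v0 * pq i L t q0 v0
      = ∑ i, (a i - fvec L i t q0 v0) * pv i C t q0 v0 := by
    rw [← Finset.sum_sub_distrib]
    have step1 : ∑ i, (Pchar L C i t q0 v0
          * (pt (pv i L) t q0 v0 + (∑ k, v0 k * pq k (pv i L) t q0 v0)
            + ∑ k, a k * pv k (pv i L) t q0 v0)
          - Pchar L C i t q0 v0 * pq i L t q0 v0)
        = (∑ i, ∑ k, a k * (gmat L t q0 v0 k i * Pchar L C i t q0 v0))
          - ∑ i, Pchar L C i t q0 v0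
            * (pq i L t q0 v0 - pt (pv i L) t q0 v0
              - ∑ k, v0 k * pq k (pv i L) t q0 v0) := by
      rw [← Finset.sum_sub_distrib]
      refine Finset.sum_congr rfl fun i _ => ?_
      have : ∑ k, a k * (gmat L t q0 v0 k i * Pchar L C i t q0 v0)
          = (∑ k, a k * pv k (pv i L) t q0 v0) * Pchar L C i t q0 v0 := by
        rw [Finset.sum_mul]
        refine Finset.sum_congr rfl fun k _ => ?_
        show a k * (pv k (pv i L) t q0 v0 * Pchar L C i t q0 v0) = _
        ring
      rw [this]; ring
    rw [step1, claim2, Finset.sum_comm]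
    have step2 : ∑ k, ∑ i, a k * (gmat L t q0 v0 k i * Pchar L C i t q0 v0)
        = ∑ k, a k * pv k C t q0 v0 := by
      refine Finset.sum_congr rfl fun k _ => ?_
      rw [← Finset.mul_sum, claim1 k]
    rw [step2, ← Finset.sum_sub_distrib]
    refine Finset.sum_congr rfl fun i _ => ?_
    ring
  rw [Finset.sum_add_distrib]
  linarith [hmain]

end NoetherAux

/-- Noether's theorem, converse direction: if `C` satisfies the
off-shell multiplier identity `dC/dt = (q̈^i − f^i)∂_{q̇^i}C` along arbitrary
curves, then `P^i = (g⁻¹)^{ij}∂_{q̇^j}C` is an infinitesimal variational symmetry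
of `L` with `W = P^i ∂_{q̇^i}L − C`. -/
theorem noether_converse {N : ℕ}
    (L : Fn N) (hL : SmoothFn L)
    (hg : ∀ t q v, IsUnit (gmat L t q v))
    (C : Fn N) (hC : SmoothFn C)
    (hmult : ∀ (q : ℝ → (Fin N → ℝ)), ContDiff ℝ 2 q → ∀ t : ℝ,
      deriv (fun s => C s (q s) (deriv q s)) t
        = ∑ i, (deriv (deriv q) t i - fvec L i t (q t) (deriv q t))
            * pv i C t (q t) (deriv q t)) :
    ∀ (q : ℝ → (Fin N → ℝ)), ContDiff ℝ 2 q → ∀ t : ℝ,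
      (∑ i, Pchar L C i t (q t) (deriv q t) * pq i L t (q t) (deriv q t))
        + (∑ i, deriv (fun s => Pchar L C i s (q s) (deriv q s)) t
            * pv i L t (q t) (deriv q t))
      = deriv (fun s => (∑ i, Pchar L C i s (q s) (deriv q s)
          * pv i L s (q s) (deriv q s)) - C s (q s) (deriv q s)) t := by
  exact NoetherAux.noether_converse_aux L hL hg C hC hmult
end

section
/- For a smooth Lagrangian L(t,q,q̇), the following third-derivative commutativity relations hold: ∂h_{jk}/∂q̇^l = ∂g_{kl}/∂q^j and ∂g_{ik}/∂q̇^l = ∂g_{kl}/∂q̇^i, where g_{ij} = ∂²L/∂q̇^i∂q̇^j and h_{ij} = ∂²L/∂q^i∂q̇^j; consequently, the expression S_{kl} = g_{ki}g_{lj}𝒟_t(g^{-1})^{ij} − g_{ik}∂f^i/∂q̇^l + h_{kl} − h_{lk} vanishes identically, where f^i = (g^{-1})^{ij}(∂_{q^j}L − ∂²_{tq̇^j}L − q̇^k h_{kj}) and 𝒟_t = ∂_t + q̇^j∂_{q^j} + f^j∂_{q̇^j}. -/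
open Matrix

namespace Aux

variable {N : ℕ}

abbrev EE (N : ℕ) := ℝ × (Fin N → ℝ) × (Fin N → ℝ)

/-- Total function on the product space. -/
def tot (F : Fn N) : EE N → ℝ := fun p => F p.1 p.2.1 p.2.2

def et : EE N := (1, 0, 0)
def eq' (i : Fin N) : EE N := (0, Pi.single i 1, 0)
def ev' (i : Fin N) : EE N := (0, 0, Pi.single i 1)

/-- Directional derivative. -/
noncomputable def Dd (u : EE N) (F : Fn N) : Fn N :=
  fun t q v => fderiv ℝ (tot F) (t, q, v) u

theorem hasDerivAt_update (q : Fin N → ℝ) (i : Fin N) (s : ℝ) :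
    HasDerivAt (fun x => Function.update q i x) (Pi.single i 1) s := by
  rw [hasDerivAt_pi]
  intro j
  by_cases h : j = i
  · subst h
    simp only [Function.update_self, Pi.single_eq_same]
    exact hasDerivAt_id s
  · simp only [Function.update_of_ne h, Pi.single_eq_of_ne h]
    exact hasDerivAt_const s (q j)

theorem hasDerivAt_curve_t (t : ℝ) (q v : Fin N → ℝ) :
    HasDerivAt (fun s => ((s, q, v) : EE N)) (et (N := N)) t :=
  (hasDerivAt_id t).prodMk (hasDerivAt_const t (q, v))

theorem hasDerivAt_curve_q (t : ℝ) (q v : Fin N → ℝ) (i : Fin N) :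
    HasDerivAt (fun s => ((t, Function.update q i s, v) : EE N)) (eq' (N := N) i) (q i) :=
  (hasDerivAt_const (q i) t).prodMk ((hasDerivAt_update q i (q i)).prodMk (hasDerivAt_const (q i) v))

theorem hasDerivAt_curve_v (t : ℝ) (q v : Fin N → ℝ) (i : Fin N) :
    HasDerivAt (fun s => ((t, q, Function.update v i s) : EE N)) (ev' (N := N) i) (v i) :=
  (hasDerivAt_const (v i) t).prodMk ((hasDerivAt_const (v i) q).prodMk (hasDerivAt_update v i (v i)))

theorem slice_t {F : Fn N} (hF : SmoothFn F) (t : ℝ) (q v : Fin N → ℝ) :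
    HasDerivAt (fun s => F s q v) (pt F t q v) t := by
  have h := ((hF.differentiable (by simp) (t, q, v)).hasFDerivAt).comp_hasDerivAt t
    (hasDerivAt_curve_t t q v)
  have h2 : HasDerivAt (fun s => F s q v) (fderiv ℝ (tot F) (t, q, v) et) t := h
  show HasDerivAt _ (deriv (fun s => F s q v) t) t
  rw [h2.deriv]; exact h2

theorem slice_q {F : Fn N} (hF : SmoothFn F) (t : ℝ) (q v : Fin N → ℝ) (i : Fin N) :
    HasDerivAt (fun s => F t (Function.update q i s) v) (pq i F t q v) (q i) := by
  have h := ((hF.differentiable (by simp) (t, Function.update q i (q i), v)).hasFDerivAt).comp_hasDerivAt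
    (q i) (hasDerivAt_curve_q t q v i)
  have h2 : HasDerivAt (fun s => F t (Function.update q i s) v)
      (fderiv ℝ (tot F) (t, Function.update q i (q i), v) (eq' i)) (q i) := h
  show HasDerivAt _ (deriv (fun s => F t (Function.update q i s) v) (q i)) (q i)
  rw [h2.deriv]; exact h2

theorem slice_v {F : Fn N} (hF : SmoothFn F) (t : ℝ) (q v : Fin N → ℝ) (i : Fin N) :
    HasDerivAt (fun s => F t q (Function.update v i s)) (pv i F t q v) (v i) := by
  have h := ((hF.differentiable (by simp) (t, q, Function.update v i (v i))).hasFDerivAt).comp_hasDerivAt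
    (v i) (hasDerivAt_curve_v t q v i)
  have h2 : HasDerivAt (fun s => F t q (Function.update v i s))
      (fderiv ℝ (tot F) (t, q, Function.update v i (v i)) (ev' i)) (v i) := h
  show HasDerivAt _ (deriv (fun s => F t q (Function.update v i s)) (v i)) (v i)
  rw [h2.deriv]; exact h2

theorem pt_eq_Dd {F : Fn N} (hF : SmoothFn F) : pt F = Dd et F := by
  funext t q v
  have h := ((hF.differentiable (by simp) (t, q, v)).hasFDerivAt).comp_hasDerivAt t
    (hasDerivAt_curve_t t q v)
  exact h.deriv

theorem pq_eq_Dd {F : Fn N} (hF : SmoothFn F) (i : Fin N) : pq i F = Dd (eq' i) F := by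
  funext t q v
  have h := ((hF.differentiable (by simp) (t, Function.update q i (q i), v)).hasFDerivAt).comp_hasDerivAt
    (q i) (hasDerivAt_curve_q t q v i)
  rw [Function.update_eq_self] at h
  exact h.deriv

theorem pv_eq_Dd {F : Fn N} (hF : SmoothFn F) (i : Fin N) : pv i F = Dd (ev' i) F := by
  funext t q v
  have h := ((hF.differentiable (by simp) (t, q, Function.update v i (v i))).hasFDerivAt).comp_hasDerivAt
    (v i) (hasDerivAt_curve_v t q v i)
  rw [Function.update_eq_self] at h
  exact h.deriv

theorem smooth_Dd {F : Fn N} (hF : SmoothFn F) (u : EE N) : SmoothFn (Dd u F) :=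
  (hF.fderiv_right (by simp)).clm_apply contDiff_const

theorem smooth_pt {F : Fn N} (hF : SmoothFn F) : SmoothFn (pt F) := by
  rw [pt_eq_Dd hF]; exact smooth_Dd hF _

theorem smooth_pq {F : Fn N} (hF : SmoothFn F) (i : Fin N) : SmoothFn (pq i F) := by
  rw [pq_eq_Dd hF]; exact smooth_Dd hF _

theorem smooth_pv {F : Fn N} (hF : SmoothFn F) (i : Fin N) : SmoothFn (pv i F) := by
  rw [pv_eq_Dd hF]; exact smooth_Dd hF _

theorem Dd_comm {F : Fn N} (hF : SmoothFn F) (u w : EE N) :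
    Dd u (Dd w F) = Dd w (Dd u F) := by
  have hA : ContDiff ℝ (⊤ : ℕ∞) (fun p => fderiv ℝ (tot F) p) := hF.fderiv_right (by simp)
  have key : ∀ (u w : EE N) (x : EE N),
      Dd u (Dd w F) x.1 x.2.1 x.2.2 = fderiv ℝ (fun p => fderiv ℝ (tot F) p) x u w := by
    intro u w x
    show fderiv ℝ (fun p => (fderiv ℝ (tot F) p) w) x u = _
    rw [fderiv_clm_apply (hA.differentiable (by simp) x) (differentiableAt_const w)]
    simp
  funext t q v
  have h1 := key u w (t, q, v)
  have h2 := key w u (t, q, v)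
  rw [h1, h2]
  exact second_derivative_symmetric (fun y => (hF.differentiable (by simp) y).hasFDerivAt)
    ((hA.differentiable (by simp) (t, q, v)).hasFDerivAt) u w

theorem pv_pq_comm {F : Fn N} (hF : SmoothFn F) (l j : Fin N) :
    pv l (pq j F) = pq j (pv l F) := by
  rw [pq_eq_Dd hF, pv_eq_Dd (smooth_Dd hF _), pv_eq_Dd hF, pq_eq_Dd (smooth_Dd hF _),
    Dd_comm hF]

theorem pv_pv_comm {F : Fn N} (hF : SmoothFn F) (l i : Fin N) :
    pv l (pv i F) = pv i (pv l F) := by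
  rw [pv_eq_Dd hF i, pv_eq_Dd (smooth_Dd hF _), pv_eq_Dd hF l, pv_eq_Dd (smooth_Dd hF _),
    Dd_comm hF]

theorem pv_pt_comm {F : Fn N} (hF : SmoothFn F) (l : Fin N) :
    pv l (pt F) = pt (pv l F) := by
  rw [pt_eq_Dd hF, pv_eq_Dd (smooth_Dd hF _), pv_eq_Dd hF, pt_eq_Dd (smooth_Dd hF _),
    Dd_comm hF]

end Aux
namespace Aux
variable {N : ℕ}

theorem smooth_const (c : ℝ) : SmoothFn (fun _ _ _ => c : Fn N) := contDiff_const

theorem smooth_coord (m : Fin N) : SmoothFn (fun _ _ v => v m : Fn N) :=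
  (ContinuousLinearMap.proj (R := ℝ) (φ := fun _ : Fin N => ℝ) m).contDiff.comp
    (contDiff_snd.comp contDiff_snd)

theorem smooth_mul {F G : Fn N} (hF : SmoothFn F) (hG : SmoothFn G) :
    SmoothFn (fun t q v => F t q v * G t q v) := hF.mul hG

theorem smooth_sub {F G : Fn N} (hF : SmoothFn F) (hG : SmoothFn G) :
    SmoothFn (fun t q v => F t q v - G t q v) := hF.sub hG

theorem smooth_sum {ι : Type*} {s : Finset ι} {F : ι → Fn N}
    (hF : ∀ i ∈ s, SmoothFn (F i)) :
    SmoothFn (fun t q v => ∑ i ∈ s, F i t q v) := ContDiff.sum hF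

-- Derivation (Leibniz/linearity) rules, pointwise.
theorem pt_mul {F G : Fn N} (hF : SmoothFn F) (hG : SmoothFn G) (t : ℝ) (q v : Fin N → ℝ) :
    pt (fun t q v => F t q v * G t q v) t q v
      = pt F t q v * G t q v + F t q v * pt G t q v :=
  ((slice_t hF t q v).mul (slice_t hG t q v)).deriv

theorem pq_mul {F G : Fn N} (hF : SmoothFn F) (hG : SmoothFn G) (i : Fin N)
    (t : ℝ) (q v : Fin N → ℝ) :
    pq i (fun t q v => F t q v * G t q v) t q v
      = pq i F t q v * G t q v + F t q v * pq i G t q v := by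
  have h := ((slice_q hF t q v i).fun_mul (slice_q hG t q v i)).deriv
  rw [Function.update_eq_self] at h
  exact h

theorem pv_mul {F G : Fn N} (hF : SmoothFn F) (hG : SmoothFn G) (i : Fin N)
    (t : ℝ) (q v : Fin N → ℝ) :
    pv i (fun t q v => F t q v * G t q v) t q v
      = pv i F t q v * G t q v + F t q v * pv i G t q v := by
  have h := ((slice_v hF t q v i).fun_mul (slice_v hG t q v i)).deriv
  rw [Function.update_eq_self] at h
  exact h

theorem pt_sub {F G : Fn N} (hF : SmoothFn F) (hG : SmoothFn G) (t : ℝ) (q v : Fin N → ℝ) :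
    pt (fun t q v => F t q v - G t q v) t q v = pt F t q v - pt G t q v :=
  ((slice_t hF t q v).sub (slice_t hG t q v)).deriv

theorem pq_sub {F G : Fn N} (hF : SmoothFn F) (hG : SmoothFn G) (i : Fin N)
    (t : ℝ) (q v : Fin N → ℝ) :
    pq i (fun t q v => F t q v - G t q v) t q v = pq i F t q v - pq i G t q v :=
  ((slice_q hF t q v i).sub (slice_q hG t q v i)).deriv

theorem pv_sub {F G : Fn N} (hF : SmoothFn F) (hG : SmoothFn G) (i : Fin N)
    (t : ℝ) (q v : Fin N → ℝ) :
    pv i (fun t q v => F t q v - G t q v) t q v = pv i F t q v - pv i G t q v :=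
  ((slice_v hF t q v i).sub (slice_v hG t q v i)).deriv

theorem pt_sum {ι : Type*} {s : Finset ι} {F : ι → Fn N}
    (hF : ∀ i ∈ s, SmoothFn (F i)) (t : ℝ) (q v : Fin N → ℝ) :
    pt (fun t q v => ∑ i ∈ s, F i t q v) t q v = ∑ i ∈ s, pt (F i) t q v :=
  (HasDerivAt.fun_sum (fun i hi => slice_t (hF i hi) t q v)).deriv

theorem pq_sum {ι : Type*} {s : Finset ι} {F : ι → Fn N}
    (hF : ∀ i ∈ s, SmoothFn (F i)) (j : Fin N) (t : ℝ) (q v : Fin N → ℝ) :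
    pq j (fun t q v => ∑ i ∈ s, F i t q v) t q v = ∑ i ∈ s, pq j (F i) t q v :=
  (HasDerivAt.fun_sum (fun i hi => slice_q (hF i hi) t q v j)).deriv

theorem pv_sum {ι : Type*} {s : Finset ι} {F : ι → Fn N}
    (hF : ∀ i ∈ s, SmoothFn (F i)) (j : Fin N) (t : ℝ) (q v : Fin N → ℝ) :
    pv j (fun t q v => ∑ i ∈ s, F i t q v) t q v = ∑ i ∈ s, pv j (F i) t q v :=
  (HasDerivAt.fun_sum (fun i hi => slice_v (hF i hi) t q v j)).deriv

theorem pt_const (c : ℝ) (t : ℝ) (q v : Fin N → ℝ) :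
    pt (fun _ _ _ => c : Fn N) t q v = 0 := deriv_const t c

theorem pq_const (c : ℝ) (i : Fin N) (t : ℝ) (q v : Fin N → ℝ) :
    pq i (fun _ _ _ => c : Fn N) t q v = 0 := deriv_const (q i) c

theorem pv_const (c : ℝ) (i : Fin N) (t : ℝ) (q v : Fin N → ℝ) :
    pv i (fun _ _ _ => c : Fn N) t q v = 0 := deriv_const (v i) c

theorem pt_coord (m : Fin N) (t : ℝ) (q v : Fin N → ℝ) :
    pt (fun _ _ v => v m : Fn N) t q v = 0 := deriv_const t (v m)

theorem pq_coord (m i : Fin N) (t : ℝ) (q v : Fin N → ℝ) :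
    pq i (fun _ _ v => v m : Fn N) t q v = 0 := deriv_const (q i) (v m)

theorem pv_coord (m l : Fin N) (t : ℝ) (q v : Fin N → ℝ) :
    pv l (fun _ _ v => v m : Fn N) t q v = if m = l then 1 else 0 := by
  show deriv (fun s => Function.update v l s m) (v l) = _
  by_cases h : m = l
  · subst h
    simp only [Function.update_self, if_pos rfl]
    exact deriv_id (v m)
  · simp only [Function.update_of_ne h, if_neg h]
    exact deriv_const (v l) (v m)

end Aux
namespace Aux
variable {N : ℕ}

theorem smooth_prod {ι : Type*} {s : Finset ι} {F : ι → Fn N}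
    (h : ∀ i ∈ s, SmoothFn (F i)) :
    SmoothFn (fun t q v => ∏ i ∈ s, F i t q v) :=
  contDiff_prod fun i hi => h i hi

theorem smooth_G {L : Fn N} (hL : SmoothFn L) (i j : Fin N) :
    SmoothFn (fun t q v => gmat L t q v i j) := smooth_pv (smooth_pv hL j) i

theorem smooth_det {M : ℝ → (Fin N → ℝ) → (Fin N → ℝ) → Matrix (Fin N) (Fin N) ℝ}
    (h : ∀ i j, SmoothFn (fun t q v => M t q v i j)) :
    SmoothFn (fun t q v => (M t q v).det) := by
  have e : (fun t q v => (M t q v).det : Fn N) = fun t q v =>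
      ∑ σ : Equiv.Perm (Fin N), ((Equiv.Perm.sign σ : ℤ) : ℝ) * ∏ i, M t q v (σ i) i := by
    funext t q v
    rw [Matrix.det_apply]
    simp [Units.smul_def, zsmul_eq_mul]
  rw [e]
  exact smooth_sum fun σ _ => smooth_mul (smooth_const _) (smooth_prod fun i _ => h (σ i) i)

theorem smooth_A {L : Fn N} (hL : SmoothFn L) (hg : ∀ t q v, IsUnit (gmat L t q v))
    (i j : Fin N) : SmoothFn (fun t q v => (gmat L t q v)⁻¹ i j) := by
  have hdet : ∀ t q v, (gmat L t q v).det ≠ 0 := fun t q v =>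
    (((Matrix.isUnit_iff_isUnit_det _).mp (hg t q v))).ne_zero
  have e : (fun t q v => (gmat L t q v)⁻¹ i j : Fn N) = fun t q v =>
      ((gmat L t q v).det)⁻¹ * ((gmat L t q v).updateRow j (Pi.single i 1)).det := by
    funext t q v
    rw [Matrix.inv_def, Matrix.smul_apply, Ring.inverse_eq_inv', smul_eq_mul,
      Matrix.adjugate_apply]
  rw [e]
  refine smooth_mul (ContDiff.inv (smooth_det (smooth_G hL)) fun p => hdet p.1 p.2.1 p.2.2) ?_
  refine smooth_det fun a b => ?_
  have e2 : (fun t q v => (gmat L t q v).updateRow j (Pi.single i 1) a b : Fn N)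
      = fun t q v => if a = j then (Pi.single i 1 : Fin N → ℝ) b else gmat L t q v a b := by
    funext t q v; rw [Matrix.updateRow_apply]
  rw [e2]
  by_cases hab : a = j
  · simp only [if_pos hab]; exact smooth_const _
  · simp only [if_neg hab]; exact smooth_G hL a b

theorem hGA {L : Fn N} (hg : ∀ t q v, IsUnit (gmat L t q v)) (t : ℝ) (q v : Fin N → ℝ)
    (i j : Fin N) :
    ∑ m, gmat L t q v i m * (gmat L t q v)⁻¹ m j = if i = j then 1 else 0 := by
  have h := Matrix.mul_nonsing_inv (gmat L t q v)
    ((Matrix.isUnit_iff_isUnit_det _).mp (hg t q v))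
  calc ∑ m, gmat L t q v i m * (gmat L t q v)⁻¹ m j
      = (gmat L t q v * (gmat L t q v)⁻¹) i j := (Matrix.mul_apply).symm
    _ = (1 : Matrix (Fin N) (Fin N) ℝ) i j := by rw [h]
    _ = if i = j then 1 else 0 := Matrix.one_apply

theorem hAG {L : Fn N} (hg : ∀ t q v, IsUnit (gmat L t q v)) (t : ℝ) (q v : Fin N → ℝ)
    (i j : Fin N) :
    ∑ m, (gmat L t q v)⁻¹ i m * gmat L t q v m j = if i = j then 1 else 0 := by
  have h := Matrix.nonsing_inv_mul (gmat L t q v)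
    ((Matrix.isUnit_iff_isUnit_det _).mp (hg t q v))
  calc ∑ m, (gmat L t q v)⁻¹ i m * gmat L t q v m j
      = ((gmat L t q v)⁻¹ * gmat L t q v) i j := (Matrix.mul_apply).symm
    _ = (1 : Matrix (Fin N) (Fin N) ℝ) i j := by rw [h]
    _ = if i = j then 1 else 0 := Matrix.one_apply

end Aux
namespace Aux
variable {N : ℕ}

noncomputable def Gf (L : Fn N) (i j : Fin N) : Fn N := fun t q v => gmat L t q v i j
noncomputable def Af (L : Fn N) (i j : Fin N) : Fn N := fun t q v => (gmat L t q v)⁻¹ i j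
noncomputable def wfn (L : Fn N) (j : Fin N) : Fn N :=
  fun t q v => pq j L t q v - pt (pv j L) t q v - ∑ k, v k * pq k (pv j L) t q v

theorem smooth_Gf {L : Fn N} (hL : SmoothFn L) (i j : Fin N) : SmoothFn (Gf L i j) :=
  smooth_G hL i j

theorem smooth_Af {L : Fn N} (hL : SmoothFn L) (hg : ∀ t q v, IsUnit (gmat L t q v))
    (i j : Fin N) : SmoothFn (Af L i j) := smooth_A hL hg i j

theorem smooth_wfn {L : Fn N} (hL : SmoothFn L) (j : Fin N) : SmoothFn (wfn L j) :=
  smooth_sub (smooth_sub (smooth_pq hL j) (smooth_pt (smooth_pv hL j)))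
    (smooth_sum fun k _ => smooth_mul (smooth_coord k) (smooth_pq (smooth_pv hL j) k))

theorem fvec_eq (L : Fn N) (i : Fin N) :
    fvec L i = fun t q v => ∑ j, Af L i j t q v * wfn L j t q v := rfl

theorem smooth_fvec {L : Fn N} (hL : SmoothFn L) (hg : ∀ t q v, IsUnit (gmat L t q v))
    (i : Fin N) : SmoothFn (fvec L i) := by
  rw [fvec_eq]
  exact smooth_sum fun j _ => smooth_mul (smooth_Af hL hg i j) (smooth_wfn hL j)

theorem gsymm {L : Fn N} (hL : SmoothFn L) (t : ℝ) (q v : Fin N → ℝ) (i j : Fin N) :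
    gmat L t q v i j = gmat L t q v j i := by
  have h := pv_pv_comm hL i j
  exact congrFun (congrFun (congrFun h t) q) v

theorem Dt_const (L : Fn N) (c : ℝ) (t : ℝ) (q v : Fin N → ℝ) :
    Dt L (fun _ _ _ => c) t q v = 0 := by
  show DtF (fvec L) (fun _ _ _ => c) t q v = 0
  unfold DtF
  rw [pt_const]
  simp [pq_const, pv_const]

theorem Dt_mul {L F G : Fn N} (hF : SmoothFn F) (hG : SmoothFn G) (t : ℝ) (q v : Fin N → ℝ) :
    Dt L (fun t q v => F t q v * G t q v) t q v
      = Dt L F t q v * G t q v + F t q v * Dt L G t q v := by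
  show DtF (fvec L) _ t q v = DtF (fvec L) F t q v * _ + _ * DtF (fvec L) G t q v
  unfold DtF
  rw [pt_mul hF hG]
  have e1 : ∑ i, v i * pq i (fun t q v => F t q v * G t q v) t q v
      = (∑ i, v i * pq i F t q v) * G t q v + F t q v * ∑ i, v i * pq i G t q v := by
    rw [Finset.sum_mul, Finset.mul_sum, ← Finset.sum_add_distrib]
    exact Finset.sum_congr rfl fun i _ => by rw [pq_mul hF hG]; ring
  have e2 : ∑ i, fvec L i t q v * pv i (fun t q v => F t q v * G t q v) t q v
      = (∑ i, fvec L i t q v * pv i F t q v) * G t q v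
        + F t q v * ∑ i, fvec L i t q v * pv i G t q v := by
    rw [Finset.sum_mul, Finset.mul_sum, ← Finset.sum_add_distrib]
    exact Finset.sum_congr rfl fun i _ => by rw [pv_mul hF hG]; ring
  rw [e1, e2]
  ring

theorem Dt_sum {L : Fn N} {ι : Type*} {s : Finset ι} {F : ι → Fn N}
    (hF : ∀ i ∈ s, SmoothFn (F i)) (t : ℝ) (q v : Fin N → ℝ) :
    Dt L (fun t q v => ∑ i ∈ s, F i t q v) t q v = ∑ i ∈ s, Dt L (F i) t q v := by
  simp only [Dt, DtF]
  rw [pt_sum hF]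
  simp only [pq_sum hF, pv_sum hF, Finset.mul_sum]
  rw [Finset.sum_comm (s := Finset.univ) (t := s), Finset.sum_comm (s := Finset.univ) (t := s)]
  rw [Finset.sum_add_distrib, Finset.sum_add_distrib]

theorem pv_inv_rel {L : Fn N} (hL : SmoothFn L) (hg : ∀ t q v, IsUnit (gmat L t q v))
    (m k j : Fin N) (t : ℝ) (q v : Fin N → ℝ) :
    ∑ i, (pv m (Gf L k i) t q v * Af L i j t q v
      + Gf L k i t q v * pv m (Af L i j) t q v) = 0 := by
  have hfun : (fun t q v => ∑ i, Gf L k i t q v * Af L i j t q v : Fn N)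
      = (fun _ _ _ => if k = j then (1 : ℝ) else 0) := by
    funext t q v; exact hGA hg t q v k j
  have h1 : pv m (fun t q v => ∑ i, Gf L k i t q v * Af L i j t q v) t q v = 0 := by
    rw [hfun]; exact pv_const _ m t q v
  rw [pv_sum (fun i _ => smooth_mul (smooth_Gf hL k i) (smooth_Af hL hg i j)) m t q v] at h1
  rw [← h1]
  exact Finset.sum_congr rfl fun i _ =>
    (pv_mul (smooth_Gf hL k i) (smooth_Af hL hg i j) m t q v).symm

theorem Dt_inv_rel {L : Fn N} (hL : SmoothFn L) (hg : ∀ t q v, IsUnit (gmat L t q v))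
    (k j : Fin N) (t : ℝ) (q v : Fin N → ℝ) :
    ∑ i, (Dt L (Gf L k i) t q v * Af L i j t q v
      + Gf L k i t q v * Dt L (Af L i j) t q v) = 0 := by
  have hfun : (fun t q v => ∑ i, Gf L k i t q v * Af L i j t q v : Fn N)
      = (fun _ _ _ => if k = j then (1 : ℝ) else 0) := by
    funext t q v; exact hGA hg t q v k j
  have h1 : Dt L (fun t q v => ∑ i, Gf L k i t q v * Af L i j t q v) t q v = 0 := by
    rw [hfun]; exact Dt_const _ _ t q v
  rw [Dt_sum (fun i _ => smooth_mul (smooth_Gf hL k i) (smooth_Af hL hg i j)) t q v] at h1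
  rw [← h1]
  exact Finset.sum_congr rfl fun i _ =>
    (Dt_mul (smooth_Gf hL k i) (smooth_Af hL hg i j) t q v).symm

end Aux
namespace Aux
variable {N : ℕ}

theorem pv_Gf_comm {L : Fn N} (hL : SmoothFn L) (k i l : Fin N) :
    pv l (Gf L k i) = pv i (Gf L k l) := by
  show pv l (pv k (pv i L)) = pv i (pv k (pv l L))
  rw [pv_pv_comm (smooth_pv hL i) l k, congrArg (pv k) (pv_pv_comm hL l i),
    pv_pv_comm (smooth_pv hL l) k i]

theorem pv_hm_comm {L : Fn N} (hL : SmoothFn L) (l m j : Fin N) :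
    pv l (pq m (pv j L)) = pq m (Gf L j l) := by
  show pv l (pq m (pv j L)) = pq m (pv j (pv l L))
  rw [pv_pq_comm (smooth_pv hL j) l m, congrArg (pq m) (pv_pv_comm hL l j)]

theorem pv_ptg_comm {L : Fn N} (hL : SmoothFn L) (l j : Fin N) :
    pv l (pt (pv j L)) = pt (Gf L j l) := by
  show pv l (pt (pv j L)) = pt (pv j (pv l L))
  rw [pv_pt_comm (smooth_pv hL j) l, congrArg pt (pv_pv_comm hL l j)]

theorem pv_wfn {L : Fn N} (hL : SmoothFn L) (l k : Fin N) (t : ℝ) (q v : Fin N → ℝ) :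
    pv l (wfn L k) t q v = hmat L t q v k l - pt (Gf L k l) t q v
      - (hmat L t q v l k + ∑ m, v m * pq m (Gf L k l) t q v) := by
  have hsub1 : SmoothFn (fun t q v => pq k L t q v - pt (pv k L) t q v) :=
    smooth_sub (smooth_pq hL k) (smooth_pt (smooth_pv hL k))
  have hsm : ∀ m : Fin N, SmoothFn (fun t q v => v m * pq m (pv k L) t q v) :=
    fun m => smooth_mul (smooth_coord m) (smooth_pq (smooth_pv hL k) m)
  show pv l (fun t q v => (pq k L t q v - pt (pv k L) t q v)
      - ∑ m, v m * pq m (pv k L) t q v) t q v = _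
  rw [pv_sub hsub1 (smooth_sum fun m _ => hsm m),
    pv_sub (smooth_pq hL k) (smooth_pt (smooth_pv hL k)),
    pv_sum (fun m _ => hsm m)]
  have h1 : pv l (pq k L) t q v = hmat L t q v k l := by
    have := pv_pq_comm hL l k
    exact congrFun (congrFun (congrFun this t) q) v
  have h2 : pv l (pt (pv k L)) t q v = pt (Gf L k l) t q v :=
    congrFun (congrFun (congrFun (pv_ptg_comm hL l k) t) q) v
  have h3 : ∑ m, pv l (fun t q v => v m * pq m (pv k L) t q v) t q v
      = hmat L t q v l k + ∑ m, v m * pq m (Gf L k l) t q v := by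
    have hterm : ∀ m : Fin N, pv l (fun t q v => v m * pq m (pv k L) t q v) t q v
        = (if m = l then 1 else 0) * hmat L t q v m k
          + v m * pq m (Gf L k l) t q v := by
      intro m
      rw [pv_mul (smooth_coord m) (smooth_pq (smooth_pv hL k) m) l t q v, pv_coord,
        congrFun (congrFun (congrFun (pv_hm_comm hL l m k) t) q) v]
      rfl
    rw [Finset.sum_congr rfl fun m _ => hterm m, Finset.sum_add_distrib]
    congr 1
    simp [ite_mul]
  rw [h1, h2, h3]

theorem pv_fvec {L : Fn N} (hL : SmoothFn L) (hg : ∀ t q v, IsUnit (gmat L t q v))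
    (l i : Fin N) (t : ℝ) (q v : Fin N → ℝ) :
    pv l (fvec L i) t q v = ∑ j, (pv l (Af L i j) t q v * wfn L j t q v
      + Af L i j t q v * pv l (wfn L j) t q v) := by
  rw [fvec_eq, pv_sum (fun j _ => smooth_mul (smooth_Af hL hg i j) (smooth_wfn hL j)) l t q v]
  exact Finset.sum_congr rfl fun j _ =>
    pv_mul (smooth_Af hL hg i j) (smooth_wfn hL j) l t q v

theorem E1 {L : Fn N} (hL : SmoothFn L) (hg : ∀ t q v, IsUnit (gmat L t q v))
    (t : ℝ) (q v : Fin N → ℝ) (k l : Fin N) :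
    ∑ i, ∑ j, gmat L t q v k i * gmat L t q v l j * Dt L (Af L i j) t q v
      = - Dt L (Gf L k l) t q v := by
  have step1 : ∀ j, ∑ i, gmat L t q v k i * Dt L (Af L i j) t q v
      = -∑ i, Dt L (Gf L k i) t q v * (gmat L t q v)⁻¹ i j := by
    intro j
    have h := Dt_inv_rel hL hg k j t q v
    rw [Finset.sum_add_distrib] at h
    have h2 : ∑ x, Gf L k x t q v * Dt L (Af L x j) t q v
        = ∑ i, gmat L t q v k i * Dt L (Af L i j) t q v := rfl
    have h3 : ∑ x, Dt L (Gf L k x) t q v * Af L x j t q v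
        = ∑ i, Dt L (Gf L k i) t q v * (gmat L t q v)⁻¹ i j := rfl
    rw [h2, h3] at h
    linarith
  calc ∑ i, ∑ j, gmat L t q v k i * gmat L t q v l j * Dt L (Af L i j) t q v
      = ∑ j, gmat L t q v l j * ∑ i, gmat L t q v k i * Dt L (Af L i j) t q v := by
        rw [Finset.sum_comm]
        refine Finset.sum_congr rfl fun j _ => ?_
        rw [Finset.mul_sum]
        exact Finset.sum_congr rfl fun i _ => by ring
    _ = ∑ j, gmat L t q v l j * -∑ i, Dt L (Gf L k i) t q v * (gmat L t q v)⁻¹ i j :=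
        Finset.sum_congr rfl fun j _ => by rw [step1 j]
    _ = -∑ i, Dt L (Gf L k i) t q v * ∑ j, (gmat L t q v)⁻¹ i j * gmat L t q v j l := by
        simp only [mul_neg, Finset.sum_neg_distrib]
        congr 1
        simp only [Finset.mul_sum]
        rw [Finset.sum_comm]
        refine Finset.sum_congr rfl fun i _ => Finset.sum_congr rfl fun j _ => ?_
        rw [gsymm hL t q v l j]
        ring
    _ = -∑ i, Dt L (Gf L k i) t q v * (if i = l then 1 else 0) := by
        refine congrArg Neg.neg (Finset.sum_congr rfl fun i _ => ?_)
        rw [hAG hg t q v i l]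
    _ = - Dt L (Gf L k l) t q v := by simp

end Aux
namespace Aux
variable {N : ℕ}

theorem E2 {L : Fn N} (hL : SmoothFn L) (hg : ∀ t q v, IsUnit (gmat L t q v))
    (t : ℝ) (q v : Fin N → ℝ) (k l : Fin N) :
    ∑ i, gmat L t q v i k * pv l (fvec L i) t q v
      = -∑ i, fvec L i t q v * pv i (Gf L k l) t q v + pv l (wfn L k) t q v := by
  calc ∑ i, gmat L t q v i k * pv l (fvec L i) t q v
      = ∑ i, gmat L t q v k i * pv l (fvec L i) t q v :=
        Finset.sum_congr rfl fun i _ => by rw [gsymm hL t q v i k]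
    _ = ∑ i, gmat L t q v k i * ∑ j, (pv l (Af L i j) t q v * wfn L j t q v
          + Af L i j t q v * pv l (wfn L j) t q v) :=
        Finset.sum_congr rfl fun i _ => by rw [pv_fvec hL hg l i t q v]
    _ = ∑ j, (∑ i, gmat L t q v k i * pv l (Af L i j) t q v) * wfn L j t q v
          + ∑ j, (∑ i, gmat L t q v k i * Af L i j t q v) * pv l (wfn L j) t q v := by
        simp only [Finset.mul_sum, mul_add, Finset.sum_add_distrib, Finset.sum_mul]
        congr 1
        · rw [Finset.sum_comm]
          exact Finset.sum_congr rfl fun j _ => Finset.sum_congr rfl fun i _ => by ring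
        · rw [Finset.sum_comm]
          exact Finset.sum_congr rfl fun j _ => Finset.sum_congr rfl fun i _ => by ring
    _ = ∑ j, (-∑ i, pv l (Gf L k i) t q v * Af L i j t q v) * wfn L j t q v
          + ∑ j, (if k = j then (1 : ℝ) else 0) * pv l (wfn L j) t q v := by
        congr 1
        · refine Finset.sum_congr rfl fun j _ => ?_
          congr 1
          have h := pv_inv_rel hL hg l k j t q v
          rw [Finset.sum_add_distrib] at h
          have h2 : ∑ x, Gf L k x t q v * pv l (Af L x j) t q v
              = ∑ i, gmat L t q v k i * pv l (Af L i j) t q v := rfl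
          rw [h2] at h
          linarith
        · refine Finset.sum_congr rfl fun j _ => ?_
          congr 1
          have h2 : ∑ i, gmat L t q v k i * Af L i j t q v
              = ∑ i, gmat L t q v k i * (gmat L t q v)⁻¹ i j := rfl
          rw [h2]
          exact hGA hg t q v k j
    _ = -∑ i, pv l (Gf L k i) t q v * fvec L i t q v + pv l (wfn L k) t q v := by
        congr 1
        · simp only [neg_mul, Finset.sum_neg_distrib]
          congr 1
          have hf : ∀ i, fvec L i t q v = ∑ j, Af L i j t q v * wfn L j t q v := fun i => rfl
          simp only [Finset.sum_mul]
          rw [Finset.sum_comm]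
          refine Finset.sum_congr rfl fun i _ => ?_
          rw [hf i, Finset.mul_sum]
          exact Finset.sum_congr rfl fun j _ => by ring
        · simp
    _ = -∑ i, fvec L i t q v * pv i (Gf L k l) t q v + pv l (wfn L k) t q v := by
        congr 1
        refine congrArg Neg.neg (Finset.sum_congr rfl fun i _ => ?_)
        rw [congrFun (congrFun (congrFun (pv_Gf_comm hL k i l) t) q) v]
        ring

end Aux


/-- third-derivative commutativity relations
`∂h_{jk}/∂q̇^l = ∂g_{kl}/∂q^j` and `∂g_{ik}/∂q̇^l = ∂g_{kl}/∂q̇^i`, and the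
consequent vanishing of
`S_{kl} = g_{ki}g_{lj}𝒟_t(g⁻¹)^{ij} − g_{ik}∂f^i/∂q̇^l + h_{kl} − h_{lk}`. -/
theorem third_derivative_relations_and_S_vanishes {N : ℕ}
    (L : Fn N) (hL : SmoothFn L)
    (hg : ∀ t q v, IsUnit (gmat L t q v)) :
    (∀ t q v, ∀ j k l : Fin N,
      pv l (pq j (pv k L)) t q v = pq j (pv k (pv l L)) t q v) ∧
    (∀ t q v, ∀ i k l : Fin N,
      pv l (pv i (pv k L)) t q v = pv i (pv k (pv l L)) t q v) ∧
    (∀ t q v, ∀ k l : Fin N,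
      (∑ i, ∑ j, gmat L t q v k i * gmat L t q v l j *
          Dt L (fun t q v => (gmat L t q v)⁻¹ i j) t q v)
        - (∑ i, gmat L t q v i k * pv l (fvec L i) t q v)
        + hmat L t q v k l - hmat L t q v l k = 0) := by
  open Aux in
  refine ⟨fun t q v j k l => ?_, fun t q v i k l => ?_, fun t q v k l => ?_⟩
  · rw [Aux.pv_pq_comm (Aux.smooth_pv hL k) l j, congrArg (pq j) (Aux.pv_pv_comm hL l k)]
  · rw [Aux.pv_pv_comm (Aux.smooth_pv hL k) l i, congrArg (pv i) (Aux.pv_pv_comm hL l k)]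
  · have e1 : ∑ i, ∑ j, gmat L t q v k i * gmat L t q v l j *
        Dt L (fun t q v => (gmat L t q v)⁻¹ i j) t q v
          = - Dt L (Aux.Gf L k l) t q v := Aux.E1 hL hg t q v k l
    have e2 := Aux.E2 hL hg t q v k l
    rw [e1, e2, Aux.pv_wfn hL l k t q v]
    have hDt : Dt L (Aux.Gf L k l) t q v = pt (Aux.Gf L k l) t q v
        + ∑ m, v m * pq m (Aux.Gf L k l) t q v
        + ∑ m, fvec L m t q v * pv m (Aux.Gf L k l) t q v := rfl
    rw [hDt]
    ring
end

section
/- For a nondegenerate Lagrangian system with 𝒟_t C = 0 (C a locally conserved integral), the vector field X^ℰ_{(C)} = P^i ∂_{q^i} + (𝒟_t P^i) ∂_{q̇^i} with P^i = (g^{-1})^{ij}∂_{q̇^j}C satisfies X^ℰ_{(C)}(F) = {F, C} for every smooth function F(t,q,q̇), where { , } is the Lagrangian Poisson bracket {F₁,F₂} = (g^{-1})^{ij}(∂_{q^i}F₁ ∂_{q̇^j}F₂ − ∂_{q^i}F₂ ∂_{q̇^j}F₁) + c^{ij}∂_{q̇^i}F₁ ∂_{q̇^j}F₂. -/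
open Matrix

section Framework
variable {N : ℕ}

/-- Phase point type. -/
abbrev Pt (N : ℕ) := ℝ × (Fin N → ℝ) × (Fin N → ℝ)

/-- Uncurried version of a function of `(t,q,v)`. -/
def uc {N : ℕ} (F : Fn N) : Pt N → ℝ := fun p => F p.1 p.2.1 p.2.2

lemma smoothFn_iff (F : Fn N) : SmoothFn F ↔ ContDiff ℝ (⊤ : ℕ∞) (uc F) := Iff.rfl

/-- Directional derivative in direction `w`. -/
noncomputable def Dp {N : ℕ} (w : Pt N) (F : Fn N) : Fn N :=
  fun t q v => fderiv ℝ (uc F) (t, q, v) w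

lemma SmoothFn.diffAt {F : Fn N} (hF : SmoothFn F) (x : Pt N) :
    DifferentiableAt ℝ (uc F) x :=
  (hF.differentiable (by simp)).differentiableAt

lemma SmoothFn.dp {F : Fn N} (hF : SmoothFn F) (w : Pt N) : SmoothFn (Dp w F) := by
  have : uc (Dp w F) = fun p => (ContinuousLinearMap.apply ℝ ℝ w) (fderiv ℝ (uc F) p) := rfl
  rw [smoothFn_iff, this]
  exact (ContinuousLinearMap.apply ℝ ℝ w).contDiff.comp (hF.fderiv_right le_rfl)

lemma pt_eq_Dp {F : Fn N} (hF : SmoothFn F) (t : ℝ) (q v : Fin N → ℝ) :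
    pt F t q v = Dp ((1 : ℝ), 0, 0) F t q v := by
  have h1 : HasDerivAt (fun s : ℝ => ((s, q, v) : Pt N)) ((1 : ℝ), 0, 0) t := by
    exact HasDerivAt.prodMk (hasDerivAt_id t) (hasDerivAt_const t (q, v))
  have h2 : HasDerivAt (fun s : ℝ => F s q v)
      (fderiv ℝ (uc F) (t, q, v) ((1 : ℝ), 0, 0)) t :=
    by have h := ((hF.diffAt (t, q, v)).hasFDerivAt).comp_hasDerivAt t h1; exact h
  exact h2.deriv

lemma pq_eq_Dp {F : Fn N} (hF : SmoothFn F) (i : Fin N) (t : ℝ) (q v : Fin N → ℝ) :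
    pq i F t q v = Dp (0, Pi.single i 1, 0) F t q v := by
  have h1 : HasDerivAt (fun s : ℝ => ((t, Function.update q i s, v) : Pt N))
      (0, Pi.single i 1, 0) (q i) :=
    HasDerivAt.prodMk (hasDerivAt_const (q i) t)
      (HasDerivAt.prodMk (hasDerivAt_update q i (q i)) (hasDerivAt_const (q i) v))
  have hx : ((t, Function.update q i (q i), v) : Pt N) = (t, q, v) := by
    simp [Function.update_eq_self]
  have h2 := ((hF.diffAt (t, Function.update q i (q i), v)).hasFDerivAt).comp_hasDerivAt
    (q i) h1
  rw [hx] at h2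
  exact h2.deriv

lemma pv_eq_Dp {F : Fn N} (hF : SmoothFn F) (i : Fin N) (t : ℝ) (q v : Fin N → ℝ) :
    pv i F t q v = Dp (0, 0, Pi.single i 1) F t q v := by
  have h1 : HasDerivAt (fun s : ℝ => ((t, q, Function.update v i s) : Pt N))
      (0, 0, Pi.single i 1) (v i) :=
    HasDerivAt.prodMk (hasDerivAt_const (v i) t)
      (HasDerivAt.prodMk (hasDerivAt_const (v i) q) (hasDerivAt_update v i (v i)))
  have hx : ((t, q, Function.update v i (v i)) : Pt N) = (t, q, v) := by
    simp [Function.update_eq_self]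
  have h2 := ((hF.diffAt (t, q, Function.update v i (v i))).hasFDerivAt).comp_hasDerivAt
    (v i) h1
  rw [hx] at h2
  exact h2.deriv

end Framework
section Rules
variable {N : ℕ}

lemma pt_eq {F : Fn N} (hF : SmoothFn F) : pt F = Dp ((1:ℝ), 0, 0) F :=
  funext fun t => funext fun q => funext fun v => pt_eq_Dp hF t q v

lemma pq_eq {F : Fn N} (hF : SmoothFn F) (i : Fin N) :
    pq i F = Dp (0, Pi.single i 1, 0) F :=
  funext fun t => funext fun q => funext fun v => pq_eq_Dp hF i t q v

lemma pv_eq {F : Fn N} (hF : SmoothFn F) (i : Fin N) :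
    pv i F = Dp (0, 0, Pi.single i 1) F :=
  funext fun t => funext fun q => funext fun v => pv_eq_Dp hF i t q v

lemma SmoothFn.pt {F : Fn N} (hF : SmoothFn F) : SmoothFn (pt F) := by
  rw [pt_eq hF]; exact hF.dp _

lemma SmoothFn.pq {F : Fn N} (hF : SmoothFn F) (i : Fin N) : SmoothFn (pq i F) := by
  rw [pq_eq hF]; exact hF.dp _

lemma SmoothFn.pv {F : Fn N} (hF : SmoothFn F) (i : Fin N) : SmoothFn (pv i F) := by
  rw [pv_eq hF]; exact hF.dp _

lemma Dp_comm {F : Fn N} (hF : SmoothFn F) (w w' : Pt N) (t : ℝ) (q v : Fin N → ℝ) :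
    Dp w (Dp w' F) t q v = Dp w' (Dp w F) t q v := by
  have hd : ∀ y, HasFDerivAt (uc F) (fderiv ℝ (uc F) y) y :=
    fun y => (hF.diffAt y).hasFDerivAt
  have h2 : ContDiff ℝ (⊤ : ℕ∞) (fderiv ℝ (uc F)) := hF.fderiv_right le_rfl
  have hdd : HasFDerivAt (fderiv ℝ (uc F))
      (fderiv ℝ (fderiv ℝ (uc F)) (t, q, v)) (t, q, v) :=
    ((h2.differentiable (by simp)) _).hasFDerivAt
  have key : ∀ u u' : Pt N,
      Dp u (Dp u' F) t q v = (fderiv ℝ (fderiv ℝ (uc F)) (t, q, v) u) u' := by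
    intro u u'
    have hcomp : HasFDerivAt
        (fun p : Pt N => (ContinuousLinearMap.apply ℝ ℝ u') (fderiv ℝ (uc F) p))
        ((ContinuousLinearMap.apply ℝ ℝ u').comp
          (fderiv ℝ (fderiv ℝ (uc F)) (t, q, v))) (t, q, v) :=
      (ContinuousLinearMap.apply ℝ ℝ u').hasFDerivAt.comp _ hdd
    show fderiv ℝ (uc (Dp u' F)) (t, q, v) u = _
    have huc : uc (Dp u' F) =
        fun p : Pt N => (ContinuousLinearMap.apply ℝ ℝ u') (fderiv ℝ (uc F) p) := rfl
    rw [huc, hcomp.fderiv]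
    rfl
  rw [key w w', key w' w]
  exact second_derivative_symmetric hd hdd w w'

lemma Dp_add {F G : Fn N} (hF : SmoothFn F) (hG : SmoothFn G) (w : Pt N)
    (t : ℝ) (q v : Fin N → ℝ) :
    Dp w (fun t q v => F t q v + G t q v) t q v = Dp w F t q v + Dp w G t q v := by
  show fderiv ℝ (fun p : Pt N => uc F p + uc G p) (t, q, v) w = _
  rw [fderiv_fun_add (hF.diffAt _) (hG.diffAt _)]
  rfl

lemma Dp_sub {F G : Fn N} (hF : SmoothFn F) (hG : SmoothFn G) (w : Pt N)
    (t : ℝ) (q v : Fin N → ℝ) :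
    Dp w (fun t q v => F t q v - G t q v) t q v = Dp w F t q v - Dp w G t q v := by
  show fderiv ℝ (fun p : Pt N => uc F p - uc G p) (t, q, v) w = _
  rw [fderiv_fun_sub (hF.diffAt _) (hG.diffAt _)]
  rfl

lemma Dp_mul {F G : Fn N} (hF : SmoothFn F) (hG : SmoothFn G) (w : Pt N)
    (t : ℝ) (q v : Fin N → ℝ) :
    Dp w (fun t q v => F t q v * G t q v) t q v
      = Dp w F t q v * G t q v + F t q v * Dp w G t q v := by
  show fderiv ℝ (fun p : Pt N => uc F p * uc G p) (t, q, v) w = _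
  rw [fderiv_fun_mul (hF.diffAt _) (hG.diffAt _)]
  simp only [ContinuousLinearMap.add_apply, ContinuousLinearMap.smul_apply, smul_eq_mul]
  simp only [Dp, uc]
  ring

lemma Dp_sum {ι : Type*} (s : Finset ι) {F : ι → Fn N} (hF : ∀ i, SmoothFn (F i))
    (w : Pt N) (t : ℝ) (q v : Fin N → ℝ) :
    Dp w (fun t q v => ∑ i ∈ s, F i t q v) t q v = ∑ i ∈ s, Dp w (F i) t q v := by
  show fderiv ℝ (fun p : Pt N => ∑ i ∈ s, uc (F i) p) (t, q, v) w = _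
  rw [fderiv_fun_sum (fun i _ => (hF i).diffAt _)]
  simp only [ContinuousLinearMap.coe_sum', Finset.sum_apply]
  rfl

lemma Dp_const (c : ℝ) (w : Pt N) (t : ℝ) (q v : Fin N → ℝ) :
    Dp w (fun _ _ _ => c) t q v = 0 := by
  show fderiv ℝ (fun _ : Pt N => c) (t, q, v) w = 0
  rw [fderiv_fun_const]
  rfl

/-- The coordinate function `v i`. -/
lemma coordv_clm (i : Fin N) : uc (fun (_ : ℝ) (_ v : Fin N → ℝ) => v i)
    = ((ContinuousLinearMap.proj i).comp
        ((ContinuousLinearMap.snd ℝ (Fin N → ℝ) (Fin N → ℝ)).comp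
          (ContinuousLinearMap.snd ℝ ℝ ((Fin N → ℝ) × (Fin N → ℝ))))
        : Pt N →L[ℝ] ℝ) := rfl

lemma smooth_coordv (i : Fin N) : SmoothFn (fun (_ : ℝ) (_ v : Fin N → ℝ) => v i) := by
  rw [smoothFn_iff, coordv_clm]
  exact ContinuousLinearMap.contDiff _

lemma Dp_coordv (i : Fin N) (w : Pt N) (t : ℝ) (q v : Fin N → ℝ) :
    Dp w (fun (_ : ℝ) (_ v : Fin N → ℝ) => v i) t q v = w.2.2 i := by
  show fderiv ℝ (uc fun (_ : ℝ) (_ v : Fin N → ℝ) => v i) (t, q, v) w = w.2.2 i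
  rw [coordv_clm, ContinuousLinearMap.fderiv]
  rfl

lemma SmoothFn.add {F G : Fn N} (hF : SmoothFn F) (hG : SmoothFn G) :
    SmoothFn (fun t q v => F t q v + G t q v) := ContDiff.add hF hG

lemma SmoothFn.sub {F G : Fn N} (hF : SmoothFn F) (hG : SmoothFn G) :
    SmoothFn (fun t q v => F t q v - G t q v) := ContDiff.sub hF hG

lemma SmoothFn.mul {F G : Fn N} (hF : SmoothFn F) (hG : SmoothFn G) :
    SmoothFn (fun t q v => F t q v * G t q v) := ContDiff.mul hF hG

lemma SmoothFn.sum {ι : Type*} (s : Finset ι) {F : ι → Fn N}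
    (hF : ∀ i, SmoothFn (F i)) :
    SmoothFn (fun t q v => ∑ i ∈ s, F i t q v) := by
  rw [smoothFn_iff]
  exact ContDiff.sum fun i _ => hF i

end Rules
section MatrixSmooth
variable {N : ℕ}

lemma contDiff_det_comp {A : Pt N → Matrix (Fin N) (Fin N) ℝ}
    (h : ∀ i j, ContDiff ℝ (⊤ : ℕ∞) fun p => A p i j) :
    ContDiff ℝ (⊤ : ℕ∞) fun p => (A p).det := by
  simp_rw [Matrix.det_apply, Units.smul_def, zsmul_eq_mul]
  exact ContDiff.sum fun σ _ =>
    contDiff_const.mul (contDiff_prod fun i _ => h (σ i) i)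

lemma contDiff_adjugate_comp {A : Pt N → Matrix (Fin N) (Fin N) ℝ}
    (h : ∀ i j, ContDiff ℝ (⊤ : ℕ∞) fun p => A p i j) (i j : Fin N) :
    ContDiff ℝ (⊤ : ℕ∞) fun p => (A p).adjugate i j := by
  simp_rw [Matrix.adjugate_apply]
  apply contDiff_det_comp
  intro k l
  simp_rw [Matrix.updateRow_apply]
  by_cases hk : k = j
  · simp only [hk, if_pos]
    exact contDiff_const
  · simpa [hk] using h k l

lemma contDiff_inv_entry {A : Pt N → Matrix (Fin N) (Fin N) ℝ}
    (h : ∀ i j, ContDiff ℝ (⊤ : ℕ∞) fun p => A p i j)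
    (hu : ∀ p, IsUnit (A p)) (i j : Fin N) :
    ContDiff ℝ (⊤ : ℕ∞) fun p => (A p)⁻¹ i j := by
  simp_rw [Matrix.inv_def, Matrix.smul_apply, Ring.inverse_eq_inv', smul_eq_mul]
  exact ((contDiff_det_comp h).inv fun p =>
    (((Matrix.isUnit_iff_isUnit_det _).mp (hu p)).ne_zero)).mul
    (contDiff_adjugate_comp h i j)

end MatrixSmooth

section Named
variable {N : ℕ}

/-- Entry of `g` as a function. -/
noncomputable def gf (L : Fn N) (i j : Fin N) : Fn N := pv i (pv j L)

/-- Entry of `g⁻¹` as a function. -/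
noncomputable def ginv (L : Fn N) (i j : Fin N) : Fn N :=
  fun t q v => (gmat L t q v)⁻¹ i j

/-- Entry of `h` as a function. -/
noncomputable def hf (L : Fn N) (i j : Fin N) : Fn N := pq i (pv j L)

/-- The force covector `W_j`. -/
noncomputable def Wf (L : Fn N) (j : Fin N) : Fn N :=
  fun t q v => pq j L t q v - pt (pv j L) t q v - ∑ k, v k * pq k (pv j L) t q v

lemma gmat_entry (L : Fn N) (t : ℝ) (q v : Fin N → ℝ) (i j : Fin N) :
    gmat L t q v i j = gf L i j t q v := rfl

lemma hmat_entry (L : Fn N) (t : ℝ) (q v : Fin N → ℝ) (i j : Fin N) :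
    hmat L t q v i j = hf L i j t q v := rfl

lemma fvec_eq (L : Fn N) (i : Fin N) :
    fvec L i = fun t q v => ∑ j, ginv L i j t q v * Wf L j t q v := rfl

variable {L : Fn N}

lemma smooth_gf (hL : SmoothFn L) (i j : Fin N) : SmoothFn (gf L i j) := (hL.pv j).pv i

lemma smooth_hf (hL : SmoothFn L) (i j : Fin N) : SmoothFn (hf L i j) := (hL.pv j).pq i

lemma smooth_ginv (hL : SmoothFn L) (hg : ∀ t q v, IsUnit (gmat L t q v)) (i j : Fin N) :
    SmoothFn (ginv L i j) :=
  contDiff_inv_entry (A := fun p : Pt N => gmat L p.1 p.2.1 p.2.2)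
    (fun i j => smooth_gf hL i j) (fun p => hg p.1 p.2.1 p.2.2) i j

lemma smooth_Wf (hL : SmoothFn L) (j : Fin N) : SmoothFn (Wf L j) :=
  ((hL.pq j).sub (hL.pv j).pt).sub
    (SmoothFn.sum Finset.univ fun k => (smooth_coordv k).mul ((hL.pv j).pq k))

lemma smooth_fvec (hL : SmoothFn L) (hg : ∀ t q v, IsUnit (gmat L t q v)) (i : Fin N) :
    SmoothFn (fvec L i) := by
  rw [fvec_eq]
  exact SmoothFn.sum Finset.univ fun j => (smooth_ginv hL hg i j).mul (smooth_Wf hL j)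

lemma smooth_Pchar (hL : SmoothFn L) (hg : ∀ t q v, IsUnit (gmat L t q v)) {C : Fn N}
    (hC : SmoothFn C) (i : Fin N) : SmoothFn (Pchar L C i) :=
  SmoothFn.sum Finset.univ fun j => (smooth_ginv hL hg i j).mul (hC.pv j)

/-- `g` is symmetric. -/
lemma gf_symm (hL : SmoothFn L) (i j : Fin N) (t : ℝ) (q v : Fin N → ℝ) :
    gf L i j t q v = gf L j i t q v := by
  show pv i (pv j L) t q v = pv j (pv i L) t q v
  rw [pv_eq_Dp (hL.pv j) i, pv_eq_Dp (hL.pv i) j, pv_eq hL j, pv_eq hL i]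
  exact Dp_comm hL _ _ t q v

lemma gmat_symm (hL : SmoothFn L) (t : ℝ) (q v : Fin N → ℝ) :
    (gmat L t q v)ᵀ = gmat L t q v := by
  ext i j
  exact gf_symm hL j i t q v

/-- `g⁻¹` is symmetric. -/
lemma ginv_symm (hL : SmoothFn L) (i j : Fin N) (t : ℝ) (q v : Fin N → ℝ) :
    ginv L i j t q v = ginv L j i t q v := by
  show (gmat L t q v)⁻¹ i j = (gmat L t q v)⁻¹ j i
  conv_lhs => rw [← gmat_symm hL t q v, ← Matrix.transpose_nonsing_inv]
  rfl

/-- Entrywise inverse identities. -/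
lemma ginv_mul_g (hg : ∀ t q v, IsUnit (gmat L t q v)) (i j : Fin N)
    (t : ℝ) (q v : Fin N → ℝ) :
    ∑ k, ginv L i k t q v * gf L k j t q v = if i = j then 1 else 0 := by
  have h := Matrix.nonsing_inv_mul (gmat L t q v)
    ((Matrix.isUnit_iff_isUnit_det _).mp (hg t q v))
  have := congrFun (congrFun h i) j
  rw [Matrix.mul_apply] at this
  simp [Matrix.one_apply] at this; exact this

lemma g_mul_ginv (hg : ∀ t q v, IsUnit (gmat L t q v)) (i j : Fin N)
    (t : ℝ) (q v : Fin N → ℝ) :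
    ∑ k, gf L i k t q v * ginv L k j t q v = if i = j then 1 else 0 := by
  have h := Matrix.mul_nonsing_inv (gmat L t q v)
    ((Matrix.isUnit_iff_isUnit_det _).mp (hg t q v))
  have := congrFun (congrFun h i) j
  rw [Matrix.mul_apply] at this
  simp [Matrix.one_apply] at this; exact this

end Named
section Part4
variable {N : ℕ}

/-- Commutation lemmas for partial derivatives of smooth functions. -/
lemma pv_pt_comm {F : Fn N} (hF : SmoothFn F) (j : Fin N) :
    pv j (pt F) = pt (pv j F) := by
  rw [pt_eq hF, pv_eq (hF.dp _) j, pv_eq hF j, pt_eq (hF.dp _)]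
  exact funext fun t => funext fun q => funext fun v => Dp_comm hF _ _ t q v

lemma pv_pq_comm {F : Fn N} (hF : SmoothFn F) (i j : Fin N) :
    pv j (pq i F) = pq i (pv j F) := by
  rw [pq_eq hF i, pv_eq (hF.dp _) j, pv_eq hF j, pq_eq (hF.dp _) i]
  exact funext fun t => funext fun q => funext fun v => Dp_comm hF _ _ t q v

lemma pv_pv_comm {F : Fn N} (hF : SmoothFn F) (i j : Fin N) :
    pv j (pv i F) = pv i (pv j F) := by
  rw [pv_eq hF i, pv_eq (hF.dp _) j, pv_eq hF j, pv_eq (hF.dp _) i]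
  exact funext fun t => funext fun q => funext fun v => Dp_comm hF _ _ t q v

/-- `𝒟_t` at a point is the directional derivative along `(1, v, f)`. -/
lemma Dt_eq_Dp {L : Fn N} {G : Fn N} (hG : SmoothFn G) (t : ℝ) (q v : Fin N → ℝ) :
    Dt L G t q v = Dp ((1 : ℝ), v, fun k => fvec L k t q v) G t q v := by
  have hdecomp : (((1 : ℝ), v, fun k => fvec L k t q v) : Pt N)
      = ((1 : ℝ), 0, 0)
        + (∑ i, v i • (((0 : ℝ), Pi.single i 1, (0 : Fin N → ℝ)) : Pt N))
        + ∑ i, (fvec L i t q v) • (((0 : ℝ), (0 : Fin N → ℝ), Pi.single i 1) : Pt N) := by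
    have hsum : ∀ u : Fin N → ℝ, ∑ i, u i • (Pi.single i 1 : Fin N → ℝ) = u := by
      intro u
      calc ∑ i, u i • (Pi.single i 1 : Fin N → ℝ)
          = ∑ i, Pi.single i (u i) :=
            Finset.sum_congr rfl fun i _ => by rw [← Pi.single_smul]; simp
        _ = u := Finset.univ_sum_single u
    refine Prod.ext ?_ (Prod.ext ?_ ?_)
    · simp [Prod.fst_sum]
    · simp [Prod.fst_sum, Prod.snd_sum, hsum v]
    · simp [Prod.fst_sum, Prod.snd_sum, hsum (fun k => fvec L k t q v)]
  show pt G t q v + (∑ i, v i * pq i G t q v) + ∑ i, fvec L i t q v * pv i G t q v = _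
  show _ = fderiv ℝ (uc G) (t, q, v) _
  rw [hdecomp, map_add, map_add, map_sum, map_sum]
  simp only [_root_.map_smul, smul_eq_mul]
  rw [pt_eq_Dp hG]
  congr 1
  · congr 1
    exact Finset.sum_congr rfl fun i _ => by rw [pq_eq_Dp hG i]; rfl
  · exact Finset.sum_congr rfl fun i _ => by rw [pv_eq_Dp hG i]; rfl

/-- Derivative of an entry of `g⁻¹`. -/
lemma Dp_ginv {L : Fn N} (hL : SmoothFn L) (hg : ∀ t q v, IsUnit (gmat L t q v))
    (w : Pt N) (i l : Fin N) (t : ℝ) (q v : Fin N → ℝ) :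
    Dp w (ginv L i l) t q v
      = -∑ j, (∑ k, ginv L i k t q v * Dp w (gf L k j) t q v) * ginv L j l t q v := by
  -- differentiate the identity ∑ k, ginv i k * g k j = δ i j
  have hid : ∀ j : Fin N, (fun t q v => ∑ k, ginv L i k t q v * gf L k j t q v)
      = (fun (_ : ℝ) (_ _ : Fin N → ℝ) => if i = j then (1:ℝ) else 0) := by
    intro j
    exact funext fun t => funext fun q => funext fun v => ginv_mul_g hg i j t q v
  have hdiff : ∀ j : Fin N,
      (∑ k, Dp w (ginv L i k) t q v * gf L k j t q v)
        + ∑ k, ginv L i k t q v * Dp w (gf L k j) t q v = 0 := by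
    intro j
    have h0 : Dp w (fun t q v => ∑ k, ginv L i k t q v * gf L k j t q v) t q v = 0 := by
      rw [hid j, Dp_const]
    rw [Dp_sum Finset.univ
      (fun k => (smooth_ginv hL hg i k).mul (smooth_gf hL k j)) w t q v] at h0
    calc (∑ k, Dp w (ginv L i k) t q v * gf L k j t q v)
          + ∑ k, ginv L i k t q v * Dp w (gf L k j) t q v
        = ∑ k, (Dp w (ginv L i k) t q v * gf L k j t q v
            + ginv L i k t q v * Dp w (gf L k j) t q v) := by
          rw [Finset.sum_add_distrib]
      _ = ∑ k, Dp w (fun t q v => ginv L i k t q v * gf L k j t q v) t q v := by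
          exact Finset.sum_congr rfl fun k _ =>
            (Dp_mul (smooth_ginv hL hg i k) (smooth_gf hL k j) w t q v).symm
      _ = 0 := h0
  -- now solve for Dp w (ginv i l)
  have key : Dp w (ginv L i l) t q v
      = ∑ j, (∑ k, Dp w (ginv L i k) t q v * gf L k j t q v) * ginv L j l t q v := by
    calc Dp w (ginv L i l) t q v
        = ∑ k, Dp w (ginv L i k) t q v * (if k = l then 1 else 0) := by
          simp
      _ = ∑ k, Dp w (ginv L i k) t q v * ∑ j, gf L k j t q v * ginv L j l t q v := by
          refine Finset.sum_congr rfl fun k _ => ?_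
          rw [g_mul_ginv hg k l t q v]
      _ = ∑ k, ∑ j, Dp w (ginv L i k) t q v * gf L k j t q v * ginv L j l t q v := by
          refine Finset.sum_congr rfl fun k _ => ?_
          rw [Finset.mul_sum]
          exact Finset.sum_congr rfl fun j _ => by ring
      _ = ∑ j, (∑ k, Dp w (ginv L i k) t q v * gf L k j t q v) * ginv L j l t q v := by
          rw [Finset.sum_comm]
          exact Finset.sum_congr rfl fun j _ => by rw [Finset.sum_mul]
  rw [key, ← Finset.sum_neg_distrib]
  refine Finset.sum_congr rfl fun j _ => ?_
  have := hdiff j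
  have h2 : (∑ k, Dp w (ginv L i k) t q v * gf L k j t q v)
      = -∑ k, ginv L i k t q v * Dp w (gf L k j) t q v := by linarith
  rw [h2]
  ring

end Part4
section Algebra
variable {N : ℕ}

lemma key_algebra (g G Dg A H : Fin N → Fin N → ℝ) (Gi pC qC : Fin N → ℝ)
    (h4 : ∀ b a, Dg b a = H a b - H b a - ∑ m, A b m * g m a)
    (h5 : ∀ m j, (∑ a, g m a * G a j) = if m = j then (1:ℝ) else 0) :
    (∑ j, (-∑ a, (∑ b, Gi b * Dg b a) * G a j) * pC j)
      + ∑ j, Gi j * (-qC j - ∑ k, A j k * pC k)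
    = -(∑ j, Gi j * qC j)
      + ∑ j, (∑ a, ∑ b, Gi b * G a j * (H b a - H a b)) * pC j := by
  have e1 : ∀ j, (-∑ a, (∑ b, Gi b * Dg b a) * G a j)
      = (∑ a, ∑ b, Gi b * G a j * (H b a - H a b))
        + ∑ b, Gi b * A b j := by
    intro j
    calc -∑ a, (∑ b, Gi b * Dg b a) * G a j
        = ∑ a, ∑ b, (Gi b * G a j * (H b a - H a b)
            + ∑ m, Gi b * A b m * (g m a * G a j)) := by
          rw [← Finset.sum_neg_distrib]
          refine Finset.sum_congr rfl fun a _ => ?_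
          rw [Finset.sum_mul, ← Finset.sum_neg_distrib]
          refine Finset.sum_congr rfl fun b _ => ?_
          rw [h4 b a]
          have hins : ∑ m, Gi b * A b m * (g m a * G a j)
              = Gi b * G a j * ∑ m, A b m * g m a := by
            rw [Finset.mul_sum]
            exact Finset.sum_congr rfl fun m _ => by ring
          rw [hins]
          ring
      _ = (∑ a, ∑ b, Gi b * G a j * (H b a - H a b))
            + ∑ a, ∑ b, ∑ m, Gi b * A b m * (g m a * G a j) := by
          rw [← Finset.sum_add_distrib]
          refine Finset.sum_congr rfl fun a _ => ?_
          rw [← Finset.sum_add_distrib]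
      _ = (∑ a, ∑ b, Gi b * G a j * (H b a - H a b))
            + ∑ b, ∑ m, Gi b * A b m * (∑ a, g m a * G a j) := by
          congr 1
          rw [Finset.sum_comm]
          refine Finset.sum_congr rfl fun b _ => ?_
          rw [Finset.sum_comm]
          refine Finset.sum_congr rfl fun m _ => ?_
          rw [Finset.mul_sum]
      _ = (∑ a, ∑ b, Gi b * G a j * (H b a - H a b)) + ∑ b, Gi b * A b j := by
          congr 1
          refine Finset.sum_congr rfl fun b _ => ?_
          simp only [h5]
          simp [mul_ite]
  calc (∑ j, (-∑ a, (∑ b, Gi b * Dg b a) * G a j) * pC j)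
        + ∑ j, Gi j * (-qC j - ∑ k, A j k * pC k)
      = (∑ j, ((∑ a, ∑ b, Gi b * G a j * (H b a - H a b)) * pC j
          + (∑ b, Gi b * A b j) * pC j))
        + (-(∑ j, Gi j * qC j) - ∑ j, ∑ k, Gi j * A j k * pC k) := by
        congr 1
        · refine Finset.sum_congr rfl fun j _ => ?_
          rw [e1 j]; ring
        · rw [← Finset.sum_neg_distrib, ← Finset.sum_sub_distrib]
          refine Finset.sum_congr rfl fun j _ => ?_
          have hms : Gi j * ∑ k, A j k * pC k = ∑ k, Gi j * A j k * pC k := by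
            rw [Finset.mul_sum]
            exact Finset.sum_congr rfl fun k _ => by ring
          rw [mul_sub, hms]
          ring
    _ = -(∑ j, Gi j * qC j)
        + ∑ j, (∑ a, ∑ b, Gi b * G a j * (H b a - H a b)) * pC j := by
        rw [Finset.sum_add_distrib]
        have hcancel : ∑ j, (∑ b, Gi b * A b j) * pC j
            = ∑ j, ∑ k, Gi j * A j k * pC k := by
          rw [Finset.sum_comm]
          refine Finset.sum_congr rfl fun j _ => ?_
          rw [Finset.sum_mul]
        rw [hcancel]
        ring

end Algebra
section Substeps
variable {N : ℕ} {L C : Fn N}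

/-- The basis direction in `v`. -/
def evd {N : ℕ} (j : Fin N) : Pt N := ((0 : ℝ), (0 : Fin N → ℝ), Pi.single j 1)

lemma pv_eqd {F : Fn N} (hF : SmoothFn F) (j : Fin N) : pv j F = Dp (evd j) F :=
  pv_eq hF j

lemma Dp_coordv_evd (j i : Fin N) (t : ℝ) (q v : Fin N → ℝ) :
    Dp (evd j) (fun (_ : ℝ) (_ v : Fin N → ℝ) => v i) t q v = (Pi.single j 1 : Fin N → ℝ) i :=
  Dp_coordv i (evd j) t q v

/-- Substep A: the `v`-derivative of the conservation law. -/
lemma Dt_pv_C (hL : SmoothFn L) (hg : ∀ t q v, IsUnit (gmat L t q v))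
    (hC : SmoothFn C) (hDt : ∀ t q v, Dt L C t q v = 0) (j : Fin N)
    (t : ℝ) (q v : Fin N → ℝ) :
    Dt L (pv j C) t q v
      = - pq j C t q v - ∑ k, pv j (fvec L k) t q v * pv k C t q v := by
  have hB : SmoothFn (fun t q v => ∑ i, v i * pq i C t q v) :=
    SmoothFn.sum Finset.univ fun i => (smooth_coordv i).mul (hC.pq i)
  have hCt : SmoothFn (fun t q v => ∑ i, fvec L i t q v * pv i C t q v) :=
    SmoothFn.sum Finset.univ fun i => (smooth_fvec hL hg i).mul (hC.pv i)
  have hzero : (fun t q v => (pt C t q v + ∑ i, v i * pq i C t q v)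
      + ∑ i, fvec L i t q v * pv i C t q v)
      = (fun (_ : ℝ) (_ _ : Fin N → ℝ) => (0 : ℝ)) :=
    funext fun t => funext fun q => funext fun v => hDt t q v
  have h0 : Dp (evd j) (fun t q v => (pt C t q v + ∑ i, v i * pq i C t q v)
      + ∑ i, fvec L i t q v * pv i C t q v) t q v = 0 := by
    rw [hzero]; exact Dp_const 0 (evd j) t q v
  -- expand the left-hand side of h0
  have hq : Dp (evd j) (fun t q v => ∑ i, v i * pq i C t q v) t q v
      = pq j C t q v + ∑ i, v i * pq i (pv j C) t q v := by
    calc Dp (evd j) (fun t q v => ∑ i, v i * pq i C t q v) t q v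
        = ∑ i, Dp (evd j) (fun t q v => v i * pq i C t q v) t q v :=
          Dp_sum Finset.univ (fun i => (smooth_coordv i).mul (hC.pq i)) (evd j) t q v
      _ = ∑ i, ((Pi.single j 1 : Fin N → ℝ) i * pq i C t q v + v i * pq i (pv j C) t q v) := by
          refine Finset.sum_congr rfl fun i _ => ?_
          calc Dp (evd j) (fun t q v => v i * pq i C t q v) t q v
              = Dp (evd j) (fun (_ : ℝ) (_ v : Fin N → ℝ) => v i) t q v * pq i C t q v
                + v i * Dp (evd j) (pq i C) t q v :=
                Dp_mul (smooth_coordv i) (hC.pq i) (evd j) t q v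
            _ = (Pi.single j 1 : Fin N → ℝ) i * pq i C t q v + v i * pq i (pv j C) t q v := by
                rw [Dp_coordv_evd, ← pv_eqd (hC.pq i) j, pv_pq_comm hC i j]
      _ = pq j C t q v + ∑ i, v i * pq i (pv j C) t q v := by
          rw [Finset.sum_add_distrib]
          congr 1
          simp [Pi.single_apply]
  have hfterm : Dp (evd j) (fun t q v => ∑ i, fvec L i t q v * pv i C t q v) t q v
      = ∑ i, pv j (fvec L i) t q v * pv i C t q v
        + ∑ i, fvec L i t q v * pv i (pv j C) t q v := by
    calc Dp (evd j) (fun t q v => ∑ i, fvec L i t q v * pv i C t q v) t q v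
        = ∑ i, Dp (evd j) (fun t q v => fvec L i t q v * pv i C t q v) t q v :=
          Dp_sum Finset.univ (fun i => (smooth_fvec hL hg i).mul (hC.pv i)) (evd j) t q v
      _ = ∑ i, (pv j (fvec L i) t q v * pv i C t q v
            + fvec L i t q v * pv i (pv j C) t q v) := by
          refine Finset.sum_congr rfl fun i _ => ?_
          calc Dp (evd j) (fun t q v => fvec L i t q v * pv i C t q v) t q v
              = Dp (evd j) (fvec L i) t q v * pv i C t q v
                + fvec L i t q v * Dp (evd j) (pv i C) t q v :=
                Dp_mul (smooth_fvec hL hg i) (hC.pv i) (evd j) t q v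
            _ = pv j (fvec L i) t q v * pv i C t q v
                + fvec L i t q v * pv i (pv j C) t q v := by
                rw [← pv_eqd (smooth_fvec hL hg i) j, ← pv_eqd (hC.pv i) j,
                  pv_pv_comm hC i j]
      _ = _ := Finset.sum_add_distrib
  have hpt : Dp (evd j) (pt C) t q v = pt (pv j C) t q v := by
    rw [← pv_eqd hC.pt j, pv_pt_comm hC j]
  have main : (pt (pv j C) t q v
      + (pq j C t q v + ∑ i, v i * pq i (pv j C) t q v))
      + (∑ i, pv j (fvec L i) t q v * pv i C t q v
        + ∑ i, fvec L i t q v * pv i (pv j C) t q v) = 0 := by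
    rw [← hpt, ← hq, ← hfterm]
    rw [← Dp_add hC.pt hB (evd j) t q v, ← Dp_add (hC.pt.add hB) hCt (evd j) t q v]
    exact h0
  show pt (pv j C) t q v + ∑ i, v i * pq i (pv j C) t q v
      + ∑ i, fvec L i t q v * pv i (pv j C) t q v = _
  linarith [main]

end Substeps
section SubstepB
variable {N : ℕ} {L : Fn N}

/-- The defining identity of `f`: `∑ k, g_{kl} f^k = W_l`. -/
lemma g_fvec_id (hL : SmoothFn L) (hg : ∀ t q v, IsUnit (gmat L t q v)) (l : Fin N) :
    (fun t q v => ∑ k, gf L k l t q v * fvec L k t q v) = Wf L l := by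
  funext t q v
  calc ∑ k, gf L k l t q v * fvec L k t q v
      = ∑ k, ∑ m, gf L k l t q v * (ginv L k m t q v * Wf L m t q v) := by
        refine Finset.sum_congr rfl fun k _ => ?_
        rw [show fvec L k t q v = ∑ m, ginv L k m t q v * Wf L m t q v from rfl,
          Finset.mul_sum]
    _ = ∑ m, (∑ k, gf L l k t q v * ginv L k m t q v) * Wf L m t q v := by
        rw [Finset.sum_comm]
        refine Finset.sum_congr rfl fun m _ => ?_
        rw [Finset.sum_mul]
        refine Finset.sum_congr rfl fun k _ => ?_
        rw [gf_symm hL k l]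
        ring
    _ = Wf L l t q v := by
        simp only [g_mul_ginv hg]
        simp
/-- Substep B: evolution of the Hessian. -/
lemma Dt_gf_eq (hL : SmoothFn L) (hg : ∀ t q v, IsUnit (gmat L t q v)) (j l : Fin N)
    (t : ℝ) (q v : Fin N → ℝ) :
    Dt L (gf L j l) t q v
      = hf L l j t q v - hf L j l t q v
        - ∑ k, pv j (fvec L k) t q v * gf L k l t q v := by
  have h0 : Dp (evd j) (fun t q v => ∑ k, gf L k l t q v * fvec L k t q v) t q v
      = Dp (evd j) (Wf L l) t q v := by rw [g_fvec_id hL hg l]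
  -- expand left side
  have hlhs : Dp (evd j) (fun t q v => ∑ k, gf L k l t q v * fvec L k t q v) t q v
      = ∑ k, pv k (gf L j l) t q v * fvec L k t q v
        + ∑ k, gf L k l t q v * pv j (fvec L k) t q v := by
    calc Dp (evd j) (fun t q v => ∑ k, gf L k l t q v * fvec L k t q v) t q v
        = ∑ k, Dp (evd j) (fun t q v => gf L k l t q v * fvec L k t q v) t q v :=
          Dp_sum Finset.univ (fun k => (smooth_gf hL k l).mul (smooth_fvec hL hg k))
            (evd j) t q v
      _ = ∑ k, (pv k (gf L j l) t q v * fvec L k t q v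
            + gf L k l t q v * pv j (fvec L k) t q v) := by
          refine Finset.sum_congr rfl fun k _ => ?_
          calc Dp (evd j) (fun t q v => gf L k l t q v * fvec L k t q v) t q v
              = Dp (evd j) (gf L k l) t q v * fvec L k t q v
                + gf L k l t q v * Dp (evd j) (fvec L k) t q v :=
                Dp_mul (smooth_gf hL k l) (smooth_fvec hL hg k) (evd j) t q v
            _ = _ := by
                rw [← pv_eqd (smooth_gf hL k l) j, ← pv_eqd (smooth_fvec hL hg k) j]
                congr 2
                show pv j (pv k (pv l L)) t q v = pv k (pv j (pv l L)) t q v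
                rw [pv_pv_comm (hL.pv l) k j]
      _ = _ := Finset.sum_add_distrib
  -- expand right side
  have hrhs : Dp (evd j) (Wf L l) t q v
      = hf L l j t q v - pt (gf L j l) t q v
        - (hf L j l t q v + ∑ k, v k * pq k (gf L j l) t q v) := by
    have hsumsm : SmoothFn (fun t q v => ∑ k, v k * pq k (pv l L) t q v) :=
      SmoothFn.sum Finset.univ fun k => (smooth_coordv k).mul ((hL.pv l).pq k)
    calc Dp (evd j) (Wf L l) t q v
        = Dp (evd j) (fun t q v => pq l L t q v - pt (pv l L) t q v) t q v
          - Dp (evd j) (fun t q v => ∑ k, v k * pq k (pv l L) t q v) t q v :=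
          Dp_sub ((hL.pq l).sub (hL.pv l).pt) hsumsm (evd j) t q v
      _ = (Dp (evd j) (pq l L) t q v - Dp (evd j) (pt (pv l L)) t q v)
          - ∑ k, Dp (evd j) (fun t q v => v k * pq k (pv l L) t q v) t q v := by
          rw [Dp_sub (hL.pq l) (hL.pv l).pt (evd j) t q v,
            Dp_sum Finset.univ (fun k => (smooth_coordv k).mul ((hL.pv l).pq k))
              (evd j) t q v]
      _ = (hf L l j t q v - pt (gf L j l) t q v)
          - (hf L j l t q v + ∑ k, v k * pq k (gf L j l) t q v) := by
          congr 1
          · congr 1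
            · rw [← pv_eqd (hL.pq l) j, pv_pq_comm hL l j]; rfl
            · rw [← pv_eqd (hL.pv l).pt j, pv_pt_comm (hL.pv l) j]; rfl
          · calc ∑ k, Dp (evd j) (fun t q v => v k * pq k (pv l L) t q v) t q v
                = ∑ k, ((Pi.single j 1 : Fin N → ℝ) k * pq k (pv l L) t q v
                    + v k * pq k (gf L j l) t q v) := by
                  refine Finset.sum_congr rfl fun k _ => ?_
                  calc Dp (evd j) (fun t q v => v k * pq k (pv l L) t q v) t q v
                      = Dp (evd j) (fun (_ : ℝ) (_ v : Fin N → ℝ) => v k) t q v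
                          * pq k (pv l L) t q v
                        + v k * Dp (evd j) (pq k (pv l L)) t q v :=
                        Dp_mul (smooth_coordv k) ((hL.pv l).pq k) (evd j) t q v
                    _ = _ := by
                        rw [Dp_coordv_evd, ← pv_eqd ((hL.pv l).pq k) j,
                          pv_pq_comm (hL.pv l) k j]
                        rfl
                _ = hf L j l t q v + ∑ k, v k * pq k (gf L j l) t q v := by
                  rw [Finset.sum_add_distrib]
                  congr 1
                  simp [Pi.single_apply]
                  rfl
      _ = _ := by ring
  have main := hlhs.symm.trans (h0.trans hrhs)
  show pt (gf L j l) t q v + ∑ k, v k * pq k (gf L j l) t q v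
      + ∑ k, fvec L k t q v * pv k (gf L j l) t q v = _
  have hc1 : ∑ k, fvec L k t q v * pv k (gf L j l) t q v
      = ∑ k, pv k (gf L j l) t q v * fvec L k t q v :=
    Finset.sum_congr rfl fun k _ => by ring
  have hc2 : ∑ k, pv j (fvec L k) t q v * gf L k l t q v
      = ∑ k, gf L k l t q v * pv j (fvec L k) t q v :=
    Finset.sum_congr rfl fun k _ => by ring
  rw [hc1, hc2]
  linarith [main]

end SubstepB
section Main
variable {N : ℕ} {L C : Fn N}

lemma Dt_Pchar (hL : SmoothFn L) (hg : ∀ t q v, IsUnit (gmat L t q v))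
    (hC : SmoothFn C) (hDt : ∀ t q v, Dt L C t q v = 0) (i : Fin N)
    (t : ℝ) (q v : Fin N → ℝ) :
    Dt L (Pchar L C i) t q v
      = -(∑ k, ginv L i k t q v * pq k C t q v)
        + ∑ j, cmat L t q v i j * pv j C t q v := by
  have hDpvC : ∀ j : Fin N,
      Dp ((1:ℝ), v, fun k => fvec L k t q v) (pv j C) t q v
        = -pq j C t q v - ∑ k, pv j (fvec L k) t q v * pv k C t q v := fun j =>
    (Dt_eq_Dp (hC.pv j) t q v).symm.trans (Dt_pv_C hL hg hC hDt j t q v)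
  have hDg : ∀ b a : Fin N,
      Dp ((1:ℝ), v, fun k => fvec L k t q v) (gf L b a) t q v
        = hf L a b t q v - hf L b a t q v
          - ∑ m, pv b (fvec L m) t q v * gf L m a t q v := fun b a =>
    (Dt_eq_Dp (smooth_gf hL b a) t q v).symm.trans (Dt_gf_eq hL hg b a t q v)
  have hDginv : ∀ j : Fin N,
      Dp ((1:ℝ), v, fun k => fvec L k t q v) (ginv L i j) t q v
        = -∑ a, (∑ b, ginv L i b t q v
            * Dp ((1:ℝ), v, fun k => fvec L k t q v) (gf L b a) t q v)
            * ginv L a j t q v := fun j =>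
    Dp_ginv hL hg ((1:ℝ), v, fun k => fvec L k t q v) i j t q v
  have KA := key_algebra (fun m a => gf L m a t q v) (fun a j => ginv L a j t q v)
    (fun b a => Dp ((1:ℝ), v, fun k => fvec L k t q v) (gf L b a) t q v)
    (fun b m => pv b (fvec L m) t q v) (fun a b => hf L a b t q v)
    (fun b => ginv L i b t q v) (fun j => pv j C t q v) (fun j => pq j C t q v)
    (fun b a => hDg b a) (fun m j => g_mul_ginv hg m j t q v)
  have hcm : ∀ j : Fin N,
      (∑ a, ∑ b, ginv L i b t q v * ginv L a j t q v
        * (hf L b a t q v - hf L a b t q v)) = cmat L t q v i j := by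
    intro j
    show _ = ∑ k, ∑ l, (gmat L t q v)⁻¹ i k * (gmat L t q v)⁻¹ j l
      * (hmat L t q v k l - hmat L t q v l k)
    rw [Finset.sum_comm]
    refine Finset.sum_congr rfl fun b _ => Finset.sum_congr rfl fun a _ => ?_
    rw [ginv_symm hL a j t q v]
    rfl
  calc Dt L (Pchar L C i) t q v
      = Dp ((1:ℝ), v, fun k => fvec L k t q v) (Pchar L C i) t q v :=
        Dt_eq_Dp (smooth_Pchar hL hg hC i) t q v
    _ = ∑ j, (Dp ((1:ℝ), v, fun k => fvec L k t q v) (ginv L i j) t q v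
          * pv j C t q v
        + ginv L i j t q v
          * Dp ((1:ℝ), v, fun k => fvec L k t q v) (pv j C) t q v) := by
        calc Dp ((1:ℝ), v, fun k => fvec L k t q v) (Pchar L C i) t q v
            = ∑ j, Dp ((1:ℝ), v, fun k => fvec L k t q v)
                (fun t q v => ginv L i j t q v * pv j C t q v) t q v :=
              Dp_sum Finset.univ (fun j => (smooth_ginv hL hg i j).mul (hC.pv j))
                ((1:ℝ), v, fun k => fvec L k t q v) t q v
          _ = _ := Finset.sum_congr rfl fun j _ =>
              Dp_mul (smooth_ginv hL hg i j) (hC.pv j)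
                ((1:ℝ), v, fun k => fvec L k t q v) t q v
    _ = (∑ j, (-∑ a, (∑ b, ginv L i b t q v
            * Dp ((1:ℝ), v, fun k => fvec L k t q v) (gf L b a) t q v)
            * ginv L a j t q v) * pv j C t q v)
        + ∑ j, ginv L i j t q v
            * (-pq j C t q v - ∑ k, pv j (fvec L k) t q v * pv k C t q v) := by
        rw [Finset.sum_add_distrib]
        congr 1
        · exact Finset.sum_congr rfl fun j _ => by rw [hDginv j]
        · exact Finset.sum_congr rfl fun j _ => by rw [hDpvC j]
    _ = -(∑ j, ginv L i j t q v * pq j C t q v)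
        + ∑ j, (∑ a, ∑ b, ginv L i b t q v * ginv L a j t q v
            * (hf L b a t q v - hf L a b t q v)) * pv j C t q v := KA
    _ = -(∑ k, ginv L i k t q v * pq k C t q v)
        + ∑ j, cmat L t q v i j * pv j C t q v := by
        congr 1
        exact Finset.sum_congr rfl fun j _ => by rw [hcm j]

end Main

/-- for a locally conserved integral `C` (`𝒟_t C = 0`), the
symmetry vector field `X^ℰ_{(C)} = P^i∂_{q^i} + (𝒟_t P^i)∂_{q̇^i}` with
`P^i = (g⁻¹)^{ij}∂_{q̇^j}C` acts on any smooth `F` by the Lagrangian Poisson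
bracket: `X^ℰ_{(C)}(F) = {F, C}`. -/
theorem symmetry_action_is_poisson_bracket {N : ℕ}
    (L : Fn N) (hL : SmoothFn L)
    (hg : ∀ t q v, IsUnit (gmat L t q v))
    (C : Fn N) (hC : SmoothFn C)
    (hDt : ∀ t q v, Dt L C t q v = 0)
    (F : Fn N) (hF : SmoothFn F) :
    ∀ t q v, Xact L C F t q v = PB L F C t q v := by
  intro t q v
  show (∑ i, Pchar L C i t q v * pq i F t q v)
      + ∑ i, Dt L (Pchar L C i) t q v * pv i F t q v
    = (∑ i, ∑ j, ginv L i j t q v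
        * (pq i F t q v * pv j C t q v - pq i C t q v * pv j F t q v))
      + ∑ i, ∑ j, cmat L t q v i j * pv i F t q v * pv j C t q v
  have part1 : ∑ i, Pchar L C i t q v * pq i F t q v
      = ∑ i, ∑ j, ginv L i j t q v * (pq i F t q v * pv j C t q v) := by
    refine Finset.sum_congr rfl fun i _ => ?_
    show (∑ j, ginv L i j t q v * pv j C t q v) * pq i F t q v = _
    rw [Finset.sum_mul]
    exact Finset.sum_congr rfl fun j _ => by ring
  have part2 : ∑ i, Dt L (Pchar L C i) t q v * pv i F t q v
      = -(∑ i, ∑ k, ginv L i k t q v * pq k C t q v * pv i F t q v)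
        + ∑ i, ∑ j, cmat L t q v i j * pv j C t q v * pv i F t q v := by
    calc ∑ i, Dt L (Pchar L C i) t q v * pv i F t q v
        = ∑ i, ((-(∑ k, ginv L i k t q v * pq k C t q v)
            + ∑ j, cmat L t q v i j * pv j C t q v) * pv i F t q v) :=
          Finset.sum_congr rfl fun i _ => by rw [Dt_Pchar hL hg hC hDt i t q v]
      _ = ∑ i, ((-(∑ k, ginv L i k t q v * pq k C t q v * pv i F t q v))
            + ∑ j, cmat L t q v i j * pv j C t q v * pv i F t q v) := by
          refine Finset.sum_congr rfl fun i _ => ?_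
          rw [add_mul, neg_mul, Finset.sum_mul, Finset.sum_mul]
      _ = _ := by
          rw [Finset.sum_add_distrib, ← Finset.sum_neg_distrib]
  have match_b : ∑ i, ∑ k, ginv L i k t q v * pq k C t q v * pv i F t q v
      = ∑ i, ∑ j, ginv L i j t q v * (pq i C t q v * pv j F t q v) := by
    rw [Finset.sum_comm]
    refine Finset.sum_congr rfl fun i _ => Finset.sum_congr rfl fun j _ => ?_
    rw [ginv_symm hL j i t q v]
    ring
  have e : ∑ i, ∑ j, ginv L i j t q v
        * (pq i F t q v * pv j C t q v - pq i C t q v * pv j F t q v)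
      = (∑ i, ∑ j, ginv L i j t q v * (pq i F t q v * pv j C t q v))
        - ∑ i, ∑ j, ginv L i j t q v * (pq i C t q v * pv j F t q v) := by
    rw [← Finset.sum_sub_distrib]
    refine Finset.sum_congr rfl fun i _ => ?_
    rw [← Finset.sum_sub_distrib]
    exact Finset.sum_congr rfl fun j _ => by ring
  have c_comm : ∑ i, ∑ j, cmat L t q v i j * pv j C t q v * pv i F t q v
      = ∑ i, ∑ j, cmat L t q v i j * pv i F t q v * pv j C t q v :=
    Finset.sum_congr rfl fun i _ => Finset.sum_congr rfl fun j _ => by ring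
  rw [part1, part2, e]
  linarith [match_b, c_comm]
end
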